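/- arXiv:1502.00213 — 5 statements merged into one kernel-verified Lean document; each statement's English description precedes it below -/
import Mathlib

section
/- For all R, t ∈ (0,∞) one has the two-sided estimate (c_Ψ 2^{β₁})^{-1/(β₁−1)} · min_{k∈{1,2}} (Ψ(R)/t)^{1/(β_k−1)} ≤ Φ(R,t) ≤ c_Ψ^{1/(β₁−1)} · max_{k∈{1,2}} (Ψ(R)/t)^{1/(β_k−1)}; in particular 0 < Φ(R,t) < ∞ for all R, t ∈ (0,∞). -/
/-!
Write `q = Ψ(R)/t` and `x = R/r`. The scaling bounds compare `Ψ(r)` with `Ψ(R) (r/R)^β`, up to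
the factor `c_Ψ`, where `β` is `β₁` or `β₂` according to the side of `R` on which `r` lies and to
the direction of the inequality. Hence `R/r - t/Ψ(r)` is squeezed between expressions of the form
`x - x^β / a` with `a` a multiple of `q`. Such an expression is at most `a^{1/(β-1)}`, which gives
the upper bound; it equals `x/2` at `x = (a/2)^{1/(β-1)}`, and choosing `r` this way gives the
lower bound.
-/

open scoped NNReal
open Real

section RpowBounds

variable {a c q x β β₁ : ℝ}

lemma rpow_eq_rpow_sub_one_mul (hx : 0 < x) (β : ℝ) : x ^ β = x ^ (β - 1) * x := by
  rw [← rpow_add_one hx.ne', sub_add_cancel]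

lemma sub_rpow_div_le (ha : 0 < a) (hβ : 1 < β) (hx : 0 ≤ x) :
    x - x ^ β / a ≤ a ^ (β - 1)⁻¹ := by
  rcases le_or_gt x (a ^ (β - 1)⁻¹) with hle | hlt
  · linarith [show 0 ≤ x ^ β / a by positivity]
  · have hx0 : 0 < x := (rpow_nonneg ha.le _).trans_lt hlt
    have ha_lt : a < x ^ (β - 1) :=
      calc a = (a ^ (β - 1)⁻¹) ^ (β - 1) := (rpow_inv_rpow ha.le (by linarith)).symm
        _ < x ^ (β - 1) := rpow_lt_rpow (by positivity) hlt (by linarith)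
    have hx_lt : x < x ^ β / a := by
      rw [lt_div_iff₀ ha, rpow_eq_rpow_sub_one_mul hx0]
      nlinarith
    linarith [rpow_nonneg ha.le (β - 1)⁻¹]

lemma sub_rpow_div_eq_half (ha : 0 < a) (hβ : 1 < β) :
    (a / 2) ^ (β - 1)⁻¹ - ((a / 2) ^ (β - 1)⁻¹) ^ β / a = (a / 2) ^ (β - 1)⁻¹ / 2 := by
  have hx : 0 < (a / 2) ^ (β - 1)⁻¹ := by positivity
  rw [rpow_eq_rpow_sub_one_mul hx, rpow_inv_rpow (by positivity) (by linarith)]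
  field_simp
  ring

lemma rpow_mul_two_rpow (hc : 0 ≤ c) (hβ : 1 < β) :
    (c * 2 ^ β) ^ (β - 1)⁻¹ = 2 * (2 * c) ^ (β - 1)⁻¹ := by
  have hβ' : β * (β - 1)⁻¹ = 1 + (β - 1)⁻¹ := by
    field_simp [show β - 1 ≠ 0 by linarith]
    ring
  rw [mul_rpow hc (by positivity), ← rpow_mul zero_le_two, hβ', rpow_add two_pos, rpow_one,
    mul_rpow zero_le_two hc]
  ring

lemma rpow_mul_two_rpow_neg_mul_le (hc : 1 ≤ c) (hq : 0 ≤ q) (hβ₁ : 1 < β₁) (hβ : β₁ ≤ β) :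
    (c * 2 ^ β₁) ^ (-(β₁ - 1)⁻¹) * q ^ (β - 1)⁻¹ ≤ (c⁻¹ * q / 2) ^ (β - 1)⁻¹ / 2 := by
  have hc0 : 0 < c := by linarith
  have hexp : (β - 1)⁻¹ ≤ (β₁ - 1)⁻¹ := inv_anti₀ (by linarith) (by linarith)
  have h2c : (2 * c) ^ (β - 1)⁻¹ ≤ (2 * c) ^ (β₁ - 1)⁻¹ :=
    rpow_le_rpow_of_exponent_le (by linarith) hexp
  calc (c * 2 ^ β₁) ^ (-(β₁ - 1)⁻¹) * q ^ (β - 1)⁻¹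
      = q ^ (β - 1)⁻¹ / (2 * (2 * c) ^ (β₁ - 1)⁻¹) := by
        rw [rpow_neg (by positivity), rpow_mul_two_rpow hc0.le hβ₁, inv_mul_eq_div]
    _ ≤ q ^ (β - 1)⁻¹ / (2 * (2 * c) ^ (β - 1)⁻¹) := by gcongr
    _ = (c⁻¹ * q / 2) ^ (β - 1)⁻¹ / 2 := by
        rw [show c⁻¹ * q / 2 = q / (2 * c) by field_simp, div_rpow hq (by positivity)]
        ring

end RpowBounds

section DivSubDiv

variable {r R t K y β : ℝ}

lemma div_sub_div_le_of_le_mul_rpow (hr : 0 < r) (hR : 0 < R) (ht : 0 < t) (hK : 0 < K)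
    (hβ : 1 < β) (hy : 0 < y) (hyK : y ≤ K * (r / R) ^ β) :
    R / r - t / y ≤ (K / t) ^ (β - 1)⁻¹ := by
  have key : (R / r) ^ β / (K / t) ≤ t / y :=
    calc (R / r) ^ β / (K / t) = t / (K * (r / R) ^ β) := by
          rw [div_rpow hR.le hr.le, div_rpow hr.le hR.le]
          field_simp
      _ ≤ t / y := div_le_div_of_nonneg_left ht.le hy hyK
  linarith [sub_rpow_div_le (div_pos hK ht) hβ (div_pos hR hr).le]

lemma half_le_div_sub_div_of_mul_rpow_le (hr : 0 < r) (hR : 0 < R) (ht : 0 < t) (hK : 0 < K)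
    (hβ : 1 < β) (hyK : K * (r / R) ^ β ≤ y) (hx : R / r = (K / t / 2) ^ (β - 1)⁻¹) :
    R / r / 2 ≤ R / r - t / y := by
  have key : t / y ≤ (R / r) ^ β / (K / t) :=
    calc t / y ≤ t / (K * (r / R) ^ β) := div_le_div_of_nonneg_left ht.le (by positivity) hyK
      _ = (R / r) ^ β / (K / t) := by
          rw [div_rpow hR.le hr.le, div_rpow hr.le hR.le]
          field_simp
  have half := sub_rpow_div_eq_half (div_pos hK ht) hβ
  rw [← hx] at half
  linarith

end DivSubDiv

def HasScalingBounds (ψ : ℝ≥0 → ℝ≥0) (c β₁ β₂ : ℝ) : Prop :=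
  ∀ r R : ℝ≥0, 0 < r → r ≤ R →
    c⁻¹ * ((R : ℝ) / r) ^ β₁ ≤ (ψ R : ℝ) / ψ r ∧ (ψ R : ℝ) / ψ r ≤ c * ((R : ℝ) / r) ^ β₂

namespace HasScalingBounds

variable {ψ : ℝ≥0 → ℝ≥0} {c β₁ β₂ : ℝ} {r R t : ℝ≥0}

lemma coe_pos (h : HasScalingBounds ψ c β₁ β₂) (hc : 0 < c) (hr : 0 < r) : 0 < (ψ r : ℝ) := by
  by_contra hψ
  have hψ0 : (ψ r : ℝ) = 0 := le_antisymm (not_lt.mp hψ) (ψ r).coe_nonneg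
  have := (h r r hr le_rfl).1
  rw [hψ0, div_zero, div_self (NNReal.coe_pos.mpr hr).ne', one_rpow, mul_one] at this
  exact (inv_pos.mpr hc).not_ge this

lemma one_le (h : HasScalingBounds ψ c β₁ β₂) (hc : 0 < c) : 1 ≤ c := by
  have hψ := h.coe_pos hc one_pos
  have := (h 1 1 one_pos le_rfl).1
  rwa [div_self hψ.ne', NNReal.coe_one, div_one, one_rpow, mul_one, inv_le_one₀ hc] at this

lemma bounds_of_le (h : HasScalingBounds ψ c β₁ β₂) (hc : 0 < c) (hr : 0 < r) (hrR : r ≤ R) :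
    c⁻¹ * ψ R * ((r : ℝ) / R) ^ β₂ ≤ ψ r ∧ (ψ r : ℝ) ≤ c * ψ R * ((r : ℝ) / R) ^ β₁ := by
  have hr' : (0 : ℝ) < r := hr
  have hR' : (0 : ℝ) < R := hr'.trans_le hrR
  have hψr := h.coe_pos hc hr
  obtain ⟨hlow, hup⟩ := h r R hr hrR
  rw [← inv_div (r : ℝ) R, inv_rpow (by positivity)] at hlow hup
  constructor
  · rw [div_le_iff₀ hψr] at hup
    rw [show c⁻¹ * ψ R * ((r : ℝ) / R) ^ β₂ = ψ R / (c * (((r : ℝ) / R) ^ β₂)⁻¹) by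
      field_simp, div_le_iff₀' (by positivity)]
    exact hup
  · rw [le_div_iff₀ hψr] at hlow
    rw [show c * ψ R * ((r : ℝ) / R) ^ β₁ = ψ R / (c⁻¹ * (((r : ℝ) / R) ^ β₁)⁻¹) by
      field_simp, le_div_iff₀' (by positivity)]
    exact hlow

lemma bounds_of_ge (h : HasScalingBounds ψ c β₁ β₂) (hc : 0 < c) (hR : 0 < R) (hRr : R ≤ r) :
    c⁻¹ * ψ R * ((r : ℝ) / R) ^ β₁ ≤ ψ r ∧ (ψ r : ℝ) ≤ c * ψ R * ((r : ℝ) / R) ^ β₂ := by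
  have hψR := h.coe_pos hc hR
  obtain ⟨hlow, hup⟩ := h R r hR hRr
  constructor
  · rw [le_div_iff₀ hψR] at hlow
    linarith
  · rw [div_le_iff₀ hψR] at hup
    linarith

lemma div_sub_div_le (h : HasScalingBounds ψ c β₁ β₂) (hc : 0 < c) (hβ₁ : 1 < β₁)
    (hβ₁₂ : β₁ ≤ β₂) (hR : 0 < R) (ht : 0 < t) (hr : 0 < r) :
    (R : ℝ) / r - t / ψ r ≤
      c ^ (β₁ - 1)⁻¹ * max (((ψ R : ℝ) / t) ^ (β₁ - 1)⁻¹) (((ψ R : ℝ) / t) ^ (β₂ - 1)⁻¹) := by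
  have hψR := h.coe_pos hc hR
  have hq : 0 < (ψ R : ℝ) / t := div_pos hψR ht
  have regime : ∀ β, β₁ ≤ β →
      ((ψ R : ℝ) / t) ^ (β - 1)⁻¹ ≤
        max (((ψ R : ℝ) / t) ^ (β₁ - 1)⁻¹) (((ψ R : ℝ) / t) ^ (β₂ - 1)⁻¹) →
      (c * ψ R / t) ^ (β - 1)⁻¹ ≤
        c ^ (β₁ - 1)⁻¹ * max (((ψ R : ℝ) / t) ^ (β₁ - 1)⁻¹) (((ψ R : ℝ) / t) ^ (β₂ - 1)⁻¹) := by
    intro β hβ hmax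
    rw [mul_div_assoc, mul_rpow hc.le hq.le]
    exact mul_le_mul (rpow_le_rpow_of_exponent_le (h.one_le hc)
      (inv_anti₀ (by linarith) (by linarith))) hmax (by positivity) (by positivity)
  rcases le_total r R with hrR | hRr
  · exact (div_sub_div_le_of_le_mul_rpow hr hR ht (by positivity) hβ₁ (h.coe_pos hc hr)
      (h.bounds_of_le hc hr hrR).2).trans (regime β₁ le_rfl (le_max_left _ _))
  · exact (div_sub_div_le_of_le_mul_rpow hr hR ht (by positivity) (hβ₁.trans_le hβ₁₂)
      (h.coe_pos hc hr) (h.bounds_of_ge hc hR hRr).2).trans (regime β₂ hβ₁₂ (le_max_right _ _))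

lemma le_div_sub_div_of_mul_rpow_le (h : HasScalingBounds ψ c β₁ β₂) (hc : 0 < c)
    (hβ₁ : 1 < β₁) {β m : ℝ} (hβ : β₁ ≤ β) (hR : 0 < R) (ht : 0 < t) (hr : 0 < r)
    (hm : m ≤ ((ψ R : ℝ) / t) ^ (β - 1)⁻¹)
    (hx : (R : ℝ) / r = (c⁻¹ * ((ψ R : ℝ) / t) / 2) ^ (β - 1)⁻¹)
    (hψr : c⁻¹ * ψ R * ((r : ℝ) / R) ^ β ≤ ψ r) :
    (c * 2 ^ β₁) ^ (-(β₁ - 1)⁻¹) * m ≤ (R : ℝ) / r - t / ψ r := by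
  have hψR := h.coe_pos hc hR
  calc _ ≤ (c * 2 ^ β₁) ^ (-(β₁ - 1)⁻¹) * ((ψ R : ℝ) / t) ^ (β - 1)⁻¹ :=
        mul_le_mul_of_nonneg_left hm (by positivity)
    _ ≤ (c⁻¹ * ((ψ R : ℝ) / t) / 2) ^ (β - 1)⁻¹ / 2 :=
        rpow_mul_two_rpow_neg_mul_le (h.one_le hc) (by positivity) hβ₁ hβ
    _ = (R : ℝ) / r / 2 := by rw [hx]
    _ ≤ (R : ℝ) / r - t / ψ r :=
        half_le_div_sub_div_of_mul_rpow_le hr hR ht (by positivity) (hβ₁.trans_le hβ) hψr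
          (by rw [hx, ← mul_div_assoc])

lemma exists_le_div_sub_div (h : HasScalingBounds ψ c β₁ β₂) (hc : 0 < c) (hβ₁ : 1 < β₁)
    (hβ₁₂ : β₁ ≤ β₂) (hR : 0 < R) (ht : 0 < t) :
    ∃ r : ℝ≥0, 0 < r ∧ (c * 2 ^ β₁) ^ (-(β₁ - 1)⁻¹) *
      min (((ψ R : ℝ) / t) ^ (β₁ - 1)⁻¹) (((ψ R : ℝ) / t) ^ (β₂ - 1)⁻¹) ≤
        (R : ℝ) / r - t / ψ r := by
  have hR' : (0 : ℝ) < R := hR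
  set s := c⁻¹ * ((ψ R : ℝ) / t) / 2
  have hs : 0 < s := by positivity [h.coe_pos hc hR]
  -- `1 ≤ s` exactly when the chosen `r` lies below `R`, which decides the usable exponent.
  rcases le_or_gt 1 s with hs1 | hs1
  · have hx : 1 ≤ s ^ (β₂ - 1)⁻¹ := one_le_rpow hs1 (inv_nonneg.mpr (by linarith))
    let r : ℝ≥0 := ⟨R / s ^ (β₂ - 1)⁻¹, by positivity⟩
    have hr : 0 < r := show (0 : ℝ) < R / s ^ (β₂ - 1)⁻¹ by positivity
    have hrR : r ≤ R := show R / s ^ (β₂ - 1)⁻¹ ≤ (R : ℝ) from div_le_self hR'.le hx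
    exact ⟨r, hr, h.le_div_sub_div_of_mul_rpow_le hc hβ₁ hβ₁₂ hR ht hr (min_le_right _ _)
      (div_div_cancel₀ hR'.ne') (h.bounds_of_le hc hr hrR).1⟩
  · have hx : s ^ (β₁ - 1)⁻¹ ≤ 1 := rpow_le_one hs.le hs1.le (inv_nonneg.mpr (by linarith))
    let r : ℝ≥0 := ⟨R / s ^ (β₁ - 1)⁻¹, by positivity⟩
    have hr : 0 < r := show (0 : ℝ) < R / s ^ (β₁ - 1)⁻¹ by positivity
    have hRr : R ≤ r := show (R : ℝ) ≤ R / s ^ (β₁ - 1)⁻¹ from le_div_self hR'.le (by positivity) hx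
    exact ⟨r, hr, h.le_div_sub_div_of_mul_rpow_le hc hβ₁ le_rfl hR ht hr (min_le_left _ _)
      (div_div_cancel₀ hR'.ne') (h.bounds_of_ge hc hR hRr).1⟩

end HasScalingBounds

lemma EReal.coe_le_iSup_coe_and_iSup_coe_le_coe {ι : Sort*} {f : ι → ℝ} {a b : ℝ}
    (hlow : ∃ i, a ≤ f i) (hup : ∀ i, f i ≤ b) :
    (a : EReal) ≤ ⨆ i, (f i : EReal) ∧ ⨆ i, (f i : EReal) ≤ b :=
  ⟨hlow.elim fun i hi => le_iSup_of_le i (EReal.coe_le_coe hi),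
    iSup_le fun i => EReal.coe_le_coe (hup i)⟩

/-- Two-sided estimate for `Φ(R,t) = sup_{r>0} (R/r - t/Ψ(r))`:
`(c_Ψ 2^{β₁})^{-1/(β₁-1)} min_k (Ψ(R)/t)^{1/(β_k-1)} ≤ Φ(R,t)
  ≤ c_Ψ^{1/(β₁-1)} max_k (Ψ(R)/t)^{1/(β_k-1)}`, and in particular `0 < Φ(R,t) < ∞`. -/
theorem dynkin_hunt_stmt2 (Ψ : ℝ≥0 ≃ₜ ℝ≥0) (cΨ β₁ β₂ : ℝ)
    (hcΨ : 0 < cΨ) (hβ₁ : 1 < β₁) (hβ₁₂ : β₁ ≤ β₂)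
    (hΨ : ∀ r R : ℝ≥0, 0 < r → r ≤ R →
      cΨ⁻¹ * ((R : ℝ) / (r : ℝ)) ^ β₁ ≤ ((Ψ R : ℝ≥0) : ℝ) / ((Ψ r : ℝ≥0) : ℝ) ∧
      ((Ψ R : ℝ≥0) : ℝ) / ((Ψ r : ℝ≥0) : ℝ) ≤ cΨ * ((R : ℝ) / (r : ℝ)) ^ β₂)
    (Φ : ℝ≥0 → ℝ≥0 → EReal)
    (hΦ : ∀ R t : ℝ≥0, Φ R t = ⨆ r : {r : ℝ≥0 // 0 < r},
      (((R : ℝ) / (r.1 : ℝ) - (t : ℝ) / ((Ψ r.1 : ℝ≥0) : ℝ) : ℝ) : EReal))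
    (R t : ℝ≥0) (hR : 0 < R) (ht : 0 < t) :
    (((cΨ * 2 ^ β₁) ^ (-(β₁ - 1)⁻¹) *
        min ((((Ψ R : ℝ≥0) : ℝ) / (t : ℝ)) ^ (β₁ - 1)⁻¹)
          ((((Ψ R : ℝ≥0) : ℝ) / (t : ℝ)) ^ (β₂ - 1)⁻¹) : ℝ) : EReal) ≤ Φ R t ∧
    Φ R t ≤ ((cΨ ^ (β₁ - 1)⁻¹ *
        max ((((Ψ R : ℝ≥0) : ℝ) / (t : ℝ)) ^ (β₁ - 1)⁻¹)
          ((((Ψ R : ℝ≥0) : ℝ) / (t : ℝ)) ^ (β₂ - 1)⁻¹) : ℝ) : EReal) ∧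
    0 < Φ R t ∧ Φ R t < ⊤ := by
  have hψ : HasScalingBounds Ψ cΨ β₁ β₂ := hΨ
  have hψR := hψ.coe_pos hcΨ hR
  obtain ⟨r₀, hr₀, hlow⟩ := hψ.exists_le_div_sub_div hcΨ hβ₁ hβ₁₂ hR ht
  rw [hΦ]
  obtain ⟨hlower, hupper⟩ := EReal.coe_le_iSup_coe_and_iSup_coe_le_coe ⟨⟨r₀, hr₀⟩, hlow⟩
    fun r : {r : ℝ≥0 // 0 < r} => hψ.div_sub_div_le hcΨ hβ₁ hβ₁₂ hR ht r.2
  exact ⟨hlower, hupper, (EReal.coe_pos.2 (by positivity)).trans_le hlower,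
    hupper.trans_lt (EReal.coe_lt_top _)⟩
end

section
/- Let I ⊆ (0,∞) be an interval, let V, W be open subsets of M, and let F = F_t(x,y) : I × V × W → (0,∞) be a Borel measurable function satisfying conditions (UB1), (UB2) and (DB)_Ψ. Let c₁, c₂ ∈ (0,∞) and define H_t(x,y) := F_t(x,y) exp(−c₁ Φ(c₂ d(x,y), t)) for (t,x,y) ∈ I × V × W. Then both F and H are μ-upper bound functions on I × V × W, i.e., both are Borel measurable and satisfy (UB1), (UB2) and (UB3). -/
/-!
Condition (DB)_Ψ bounds every value of `F` by a multiple of one reference value `F_T(x₀, y₀)`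
with `T ∈ I` above the times considered. On the pieces where the time lies above `1/(n+1)` and
below `T_n`, `x` lies in a ball around `x₀`, and `y` lies in a ball around `y₀` and in the
`n`-th set of a compact exhaustion, this gives a constant bound, integrable over the `y`-piece:
this is (UB3) for `F`.

`Φ(R, t)` is a supremum of functions affine in `(R, t)`. The lower scaling of `Ψ` makes it finite
for `t > 0`, so it is convex and hence continuous on `ℝ × (0, ∞)`. It is also nonnegative for
`R ≥ 0`: take `r` with `Ψ(r) = t/ε`. So `H = F · E` with `E` continuous and `0 < E ≤ 1`, and
multiplying by such a factor preserves (UB1)–(UB3). For (UB1), the local boundedness of `F`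
needed to take the limsup of the product comes from (UB3).
-/

open scoped NNReal ENNReal
open MeasureTheory Set Filter Topology

def IsMuUpperBoundFn {M : Type*} [MetricSpace M] [MeasurableSpace M]
    (μ : MeasureTheory.Measure M) (I : Set ℝ) (V W : Set M) (G : ℝ → M → M → ℝ) : Prop :=
  (Measurable fun p : (I ×ˢ (V ×ˢ W) : Set (ℝ × M × M)) =>
      G (p : ℝ × M × M).1 (p : ℝ × M × M).2.1 (p : ℝ × M × M).2.2) ∧
  -- (UB1)
  (∀ t ∈ I, ∀ x ∈ V, ∀ y ∈ W, (∃ s ∈ I, t < s) →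
      Filter.limsup (fun s => G s x y) (nhdsWithin t (I ∩ Set.Ioi t)) ≤ G t x y) ∧
  -- (UB2)
  (∀ t ∈ I, ∀ y ∈ W, UpperSemicontinuousOn (fun x => G t x y) V) ∧
  -- (UB3)
  (∃ (h : ℕ → M → ℝ) (In : ℕ → Set ℝ) (Vn : ℕ → Set M) (Wn : ℕ → Set M),
      (∀ n, Measurable (h n)) ∧ (∀ n y, 0 ≤ h n y) ∧
      (∀ n, In n ⊆ I ∧ ∃ U : Set ℝ, IsOpen U ∧ In n = U ∩ I) ∧
      (∀ n, Vn n ⊆ V ∧ IsOpen (Vn n)) ∧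
      (∀ n, Wn n ⊆ W ∧ MeasurableSet (Wn n)) ∧
      Monotone In ∧ Monotone Vn ∧ Monotone Wn ∧
      (⋃ n, In n) = I ∧ (⋃ n, Vn n) = V ∧ (⋃ n, Wn n) = W ∧
      (∀ n, ∫⁻ y in Wn n, ENNReal.ofReal (h n y) ∂μ < ⊤) ∧
      (∀ n, ∀ t ∈ In n, ∀ x ∈ Vn n, ∀ y ∈ Wn n, G t x y ≤ h n y))

theorem UpperSemicontinuousWithinAt.mul_continuousWithinAt {α : Type*} [TopologicalSpace α]
    {f g : α → ℝ} {s : Set α} {x : α} (hf : UpperSemicontinuousWithinAt f s x)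
    (hg : ContinuousWithinAt g s x) (hf0 : ∀ᶠ y in 𝓝[s] x, 0 ≤ f y)
    (hg0 : ∀ᶠ y in 𝓝[s] x, 0 ≤ g y) :
    UpperSemicontinuousWithinAt (fun y => f y * g y) s x := by
  intro b hb
  obtain ⟨a, hfa, c, hgc, hac⟩ : ∃ a > f x, ∃ c > g x, a * c < b := by
    by_contra! h
    exact hb.not_ge (le_mul_of_forall_lt₀ h)
  filter_upwards [hf a hfa, hg (Iio_mem_nhds hgc), hf0, hg0] with y hfy hgy hf0y hg0y
  exact (mul_le_mul hfy.le (le_of_lt hgy) hg0y (hf0y.trans hfy.le)).trans_lt hac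

theorem ConvexOn.ciSup {ι E : Type*} [Nonempty ι] [AddCommMonoid E] [Module ℝ E] {s : Set E}
    {f : ι → E → ℝ} (hf : ∀ i, ConvexOn ℝ s (f i))
    (hbdd : ∀ x ∈ s, BddAbove (range fun i => f i x)) :
    ConvexOn ℝ s fun x => ⨆ i, f i x := by
  refine ⟨(hf (Classical.arbitrary ι)).1, fun x hx y hy a b ha hb hab => ciSup_le fun i => ?_⟩
  refine ((hf i).2 hx hy ha hb hab).trans (add_le_add ?_ ?_)
  · exact smul_le_smul_of_nonneg_left (le_ciSup (hbdd x hx) i) ha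
  · exact smul_le_smul_of_nonneg_left (le_ciSup (hbdd y hy) i) hb

theorem mul_sub_mul_rpow_le {A a β u : ℝ} (hA : 0 ≤ A) (ha : 0 < a) (hβ : 1 < β) (hu : 0 < u) :
    A * u - a * u ^ β ≤ A * (A / a) ^ (β - 1)⁻¹ := by
  set U := (A / a) ^ (β - 1)⁻¹
  rcases le_or_gt u U with huU | hUu
  · nlinarith [mul_le_mul_of_nonneg_left huU hA, Real.rpow_nonneg hu.le β]
  · have hUβ : U ^ (β - 1) = A / a := by
      rw [← Real.rpow_mul (by positivity), inv_mul_cancel₀ (by linarith), Real.rpow_one]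
    have hAu : A ≤ a * u ^ (β - 1) := by
      rw [← div_le_iff₀' ha, ← hUβ]
      exact Real.rpow_le_rpow (by positivity) hUu.le (by linarith)
    have hsplit : u ^ β = u ^ (β - 1) * u := by
      rw [← Real.rpow_add_one hu.ne']; ring_nf
    have : 0 ≤ A * U := by positivity
    nlinarith [mul_le_mul_of_nonneg_right hAu hu.le]

theorem exists_relOpen_exhaustion_le {α : Type*} [LinearOrder α] [TopologicalSpace α]
    [OrderTopology α] [SecondCountableTopology α] {I : Set α} (hI : I.Nonempty) :
    ∃ (T : ℕ → α) (U : ℕ → Set α), (∀ n, T n ∈ I) ∧ (∀ n, IsOpen (U n)) ∧ Monotone U ∧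
      I ⊆ ⋃ n, U n ∧ ∀ n, ∀ s ∈ U n ∩ I, s ≤ T n := by
  by_cases hmax : ∃ m, IsGreatest I m
  · obtain ⟨m, hmI, hm⟩ := hmax
    exact ⟨fun _ => m, fun _ => univ, fun _ => hmI, fun _ => isOpen_univ, monotone_const,
      fun _ _ => mem_iUnion.2 ⟨0, trivial⟩, fun _ s hs => hm hs.2⟩
  have hnot : ∀ s ∈ I, ∃ s' ∈ I, s < s' := by
    intro s hs
    by_contra! h
    exact hmax ⟨s, hs, h⟩
  have : Nonempty I := hI.to_subtype
  obtain ⟨d, hd⟩ := TopologicalSpace.exists_dense_seq I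
  refine ⟨fun n => partialSups d n, fun n => Iio (partialSups d n), fun n => (partialSups d n).2,
    fun _ => isOpen_Iio, fun a b hab => Iio_subset_Iio ((partialSups d).monotone hab), ?_,
    fun _ _ hs => hs.1.le⟩
  intro s hs
  obtain ⟨s', hs', hss'⟩ := hnot s hs
  obtain ⟨k, hk⟩ := hd.exists_mem_open (isOpen_Ioi.preimage continuous_subtype_val)
    ⟨⟨s', hs'⟩, hss'⟩
  exact mem_iUnion.2 ⟨k, lt_of_lt_of_le hk (le_partialSups d k)⟩

def HasLowerScaling (Ψ : ℝ≥0 → ℝ≥0) (c β : ℝ) : Prop :=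
  ∀ r R : ℝ≥0, 0 < r → r ≤ R → c⁻¹ * ((R : ℝ) / (r : ℝ)) ^ β ≤ (Ψ R : ℝ) / (Ψ r : ℝ)

namespace HasLowerScaling

variable {Ψ : ℝ≥0 → ℝ≥0} {c β : ℝ}

theorem psi_pos (hΨ : HasLowerScaling Ψ c β) (hc : 0 < c) {r : ℝ≥0} (hr : 0 < r) :
    0 < (Ψ r : ℝ) := by
  refine NNReal.coe_pos.2 (pos_iff_ne_zero.2 fun h0 => ?_)
  have h := hΨ r r hr le_rfl
  simp only [h0, NNReal.coe_zero, div_zero] at h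
  exact h.not_gt (mul_pos (inv_pos.2 hc) (Real.rpow_pos_of_pos (by positivity) β))

theorem psi_zero (hΨ : HasLowerScaling Ψ c β) (hc : 0 < c) (hsurj : Function.Surjective Ψ) :
    Ψ 0 = 0 := by
  obtain ⟨r, hr⟩ := hsurj 0
  rcases eq_zero_or_pos r with rfl | hr0
  · exact hr
  · exact absurd hr (NNReal.coe_pos.1 (hΨ.psi_pos hc hr0)).ne'

theorem psi_le_mul (hΨ : HasLowerScaling Ψ c β) (hc : 0 < c) (hβ : 0 ≤ β)
    (hsurj : Function.Surjective Ψ) {d b : ℝ≥0} (hdb : d ≤ b) :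
    (Ψ d : ℝ) ≤ c * Ψ b := by
  rcases eq_zero_or_pos d with rfl | hd
  · rw [hΨ.psi_zero hc hsurj, NNReal.coe_zero]
    exact mul_nonneg hc.le (NNReal.coe_nonneg _)
  have hbd : 1 ≤ ((b : ℝ) / d) ^ β :=
    Real.one_le_rpow ((one_le_div (by positivity)).2 (by exact_mod_cast hdb)) hβ
  have h := (le_mul_of_one_le_right (inv_nonneg.2 hc.le) hbd).trans (hΨ d b hd hdb)
  rw [le_div_iff₀ (hΨ.psi_pos hc hd)] at h
  calc (Ψ d : ℝ) = c * (c⁻¹ * Ψ d) := by field_simp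
    _ ≤ c * Ψ b := mul_le_mul_of_nonneg_left h hc.le

theorem mul_inv_rpow_le_div_psi (hΨ : HasLowerScaling Ψ c β) (hc : 0 < c) {t : ℝ} (ht : 0 ≤ t)
    {r : ℝ≥0} (hr : 0 < r) (hr1 : r ≤ 1) :
    t / (c * Ψ 1) * ((r : ℝ)⁻¹) ^ β ≤ t / Ψ r := by
  have h := mul_le_mul_of_nonneg_left (hΨ r 1 hr hr1) (div_nonneg ht (NNReal.coe_nonneg (Ψ 1)))
  have hΨ1 := hΨ.psi_pos hc one_pos
  have hΨr := hΨ.psi_pos hc hr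
  calc t / (c * Ψ 1) * ((r : ℝ)⁻¹) ^ β
      = t / Ψ 1 * (c⁻¹ * ((1 : ℝ≥0) / (r : ℝ)) ^ β) := by
        rw [NNReal.coe_one, one_div]; field_simp
    _ ≤ t / Ψ 1 * (Ψ 1 / Ψ r) := h
    _ = t / Ψ r := by field_simp

end HasLowerScaling

/-- `Φ(R, t)`, extended to all real `R` so that it is defined on the open convex set
`ℝ × (0, ∞)`. -/
noncomputable def psiTransform (Ψ : ℝ≥0 → ℝ≥0) (p : ℝ × ℝ) : ℝ :=
  ⨆ r : {r : ℝ≥0 // 0 < r}, p.1 / r.1 - p.2 / Ψ r.1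

section psiTransform

variable {Ψ : ℝ≥0 → ℝ≥0} {c β : ℝ}

theorem bddAbove_psiTransform (hΨ : HasLowerScaling Ψ c β) (hc : 0 < c) (hβ : 1 < β)
    (R : ℝ) {t : ℝ} (ht : 0 < t) :
    BddAbove (range fun r : {r : ℝ≥0 // 0 < r} => R / r.1 - t / Ψ r.1) := by
  have ha : 0 < t / (c * Ψ 1) := div_pos ht (mul_pos hc (hΨ.psi_pos hc one_pos))
  refine ⟨max |R| (|R| * (|R| / (t / (c * Ψ 1))) ^ (β - 1)⁻¹), ?_⟩
  rintro _ ⟨⟨r, hr⟩, rfl⟩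
  have hr' : (0 : ℝ) < r := hr
  have hR : R / r ≤ |R| * (r : ℝ)⁻¹ := by
    rw [← div_eq_mul_inv]; exact div_le_div_of_nonneg_right (le_abs_self R) hr'.le
  rcases le_total r 1 with hr1 | hr1
  · refine le_max_of_le_right ?_
    have := hΨ.mul_inv_rpow_le_div_psi hc ht.le hr hr1
    have := mul_sub_mul_rpow_le (abs_nonneg R) ha hβ (inv_pos.2 hr')
    dsimp only
    linarith
  · refine le_max_of_le_left ?_
    have : |R| * (r : ℝ)⁻¹ ≤ |R| :=
      mul_le_of_le_one_right (abs_nonneg R) (inv_le_one_of_one_le₀ (by exact_mod_cast hr1))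
    have : 0 ≤ t / Ψ r := div_nonneg ht.le (NNReal.coe_nonneg _)
    dsimp only
    linarith

theorem convexOn_psiTransform (hΨ : HasLowerScaling Ψ c β) (hc : 0 < c) (hβ : 1 < β) :
    ConvexOn ℝ (univ ×ˢ Ioi 0) (psiTransform Ψ) := by
  have : Nonempty {r : ℝ≥0 // 0 < r} := ⟨⟨1, one_pos⟩⟩
  refine ConvexOn.ciSup (fun r => ⟨convex_univ.prod (convex_Ioi 0), ?_⟩)
    fun p hp => bddAbove_psiTransform hΨ hc hβ p.1 hp.2
  intro p _ q _ a b _ _ _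
  simp only [Prod.fst_add, Prod.snd_add, Prod.smul_fst, Prod.smul_snd, smul_eq_mul]
  exact le_of_eq (by ring)

theorem continuousOn_psiTransform (hΨ : HasLowerScaling Ψ c β) (hc : 0 < c) (hβ : 1 < β) :
    ContinuousOn (psiTransform Ψ) (univ ×ˢ Ioi 0) :=
  (convexOn_psiTransform hΨ hc hβ).continuousOn (isOpen_univ.prod isOpen_Ioi)

theorem psiTransform_nonneg (hΨ : HasLowerScaling Ψ c β) (hc : 0 < c) (hβ : 1 < β)
    (hsurj : Function.Surjective Ψ) {R t : ℝ} (hR : 0 ≤ R) (ht : 0 < t) :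
    0 ≤ psiTransform Ψ (R, t) := by
  refine le_of_forall_pos_le_add fun ε hε => ?_
  obtain ⟨r, hr⟩ := hsurj (t / ε).toNNReal
  have hr0 : 0 < r := by
    refine pos_iff_ne_zero.2 fun h0 => ?_
    rw [h0, hΨ.psi_zero hc hsurj] at hr
    exact (Real.toNNReal_pos.2 (div_pos ht hε)).ne hr
  have hle := le_ciSup (bddAbove_psiTransform hΨ hc hβ R ht) ⟨r, hr0⟩
  have hterm : t / Ψ r = ε := by rw [hr, Real.coe_toNNReal _ (by positivity)]; field_simp
  have : 0 ≤ R / r := div_nonneg hR r.2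
  simp only [hterm] at hle
  rw [psiTransform]
  linarith

end psiTransform

/-- Condition (UB3), the last clause of `IsMuUpperBoundFn`. -/
def HasUB3 {M : Type*} [MetricSpace M] [MeasurableSpace M]
    (μ : Measure M) (I : Set ℝ) (V W : Set M) (G : ℝ → M → M → ℝ) : Prop :=
  ∃ (h : ℕ → M → ℝ) (In : ℕ → Set ℝ) (Vn : ℕ → Set M) (Wn : ℕ → Set M),
      (∀ n, Measurable (h n)) ∧ (∀ n y, 0 ≤ h n y) ∧
      (∀ n, In n ⊆ I ∧ ∃ U : Set ℝ, IsOpen U ∧ In n = U ∩ I) ∧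
      (∀ n, Vn n ⊆ V ∧ IsOpen (Vn n)) ∧
      (∀ n, Wn n ⊆ W ∧ MeasurableSet (Wn n)) ∧
      Monotone In ∧ Monotone Vn ∧ Monotone Wn ∧
      (⋃ n, In n) = I ∧ (⋃ n, Vn n) = V ∧ (⋃ n, Wn n) = W ∧
      (∀ n, ∫⁻ y in Wn n, ENNReal.ofReal (h n y) ∂μ < ⊤) ∧
      (∀ n, ∀ t ∈ In n, ∀ x ∈ Vn n, ∀ y ∈ Wn n, G t x y ≤ h n y)

namespace HasUB3

variable {M : Type*} [MetricSpace M] [MeasurableSpace M] {μ : Measure M} {I : Set ℝ}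
  {V W : Set M} {F G : ℝ → M → M → ℝ}

theorem mono (hF : HasUB3 μ I V W F) (hGF : ∀ t ∈ I, ∀ x ∈ V, ∀ y ∈ W, G t x y ≤ F t x y) :
    HasUB3 μ I V W G := by
  obtain ⟨h, In, Vn, Wn, hmeas, hnonneg, hIn, hVn, hWn, hImono, hVmono, hWmono, hIU, hVU, hWU,
    hint, hle⟩ := hF
  refine ⟨h, In, Vn, Wn, hmeas, hnonneg, hIn, hVn, hWn, hImono, hVmono, hWmono, hIU, hVU, hWU,
    hint, fun n t ht x hx y hy => ?_⟩
  exact (hGF t ((hIn n).1 ht) x ((hVn n).1 hx) y ((hWn n).1 hy)).trans (hle n t ht x hx y hy)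

theorem isBoundedUnder_le (hF : HasUB3 μ I V W F) {t : ℝ} {x y : M} (ht : t ∈ I) (hx : x ∈ V)
    (hy : y ∈ W) : IsBoundedUnder (· ≤ ·) (𝓝[I] t) fun s => F s x y := by
  obtain ⟨h, In, Vn, Wn, -, -, hIn, -, -, hImono, hVmono, hWmono, hIU, hVU, hWU, -, hle⟩ := hF
  obtain ⟨i, hi⟩ := mem_iUnion.1 (hIU.symm ▸ ht : t ∈ ⋃ n, In n)
  obtain ⟨j, hj⟩ := mem_iUnion.1 (hVU.symm ▸ hx : x ∈ ⋃ n, Vn n)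
  obtain ⟨k, hk⟩ := mem_iUnion.1 (hWU.symm ▸ hy : y ∈ ⋃ n, Wn n)
  set n := max i (max j k)
  obtain ⟨U, hU, hInU⟩ := (hIn n).2
  have htU : t ∈ U := (hInU ▸ hImono (le_max_left _ _) hi : t ∈ U ∩ I).1
  refine ⟨h n y, eventually_map.2 ?_⟩
  filter_upwards [inter_mem_nhdsWithin I (hU.mem_nhds htU)] with s ⟨hsI, hsU⟩
  refine hle n s (hInU ▸ ⟨hsU, hsI⟩) x (hVmono ?_ hj) y (hWmono ?_ hk) <;> omega

end HasUB3

theorem IsMuUpperBoundFn.mul {M : Type*} [MetricSpace M] [MeasurableSpace M]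
    [OpensMeasurableSpace M] [SecondCountableTopology M] {μ : Measure M} {I : Set ℝ}
    {V W : Set M} {F E : ℝ → M → M → ℝ} (hF : IsMuUpperBoundFn μ I V W F)
    (hI : I.OrdConnected) (hF0 : ∀ t ∈ I, ∀ x ∈ V, ∀ y ∈ W, 0 ≤ F t x y)
    (hE : ContinuousOn (fun p : ℝ × M × M => E p.1 p.2.1 p.2.2) (I ×ˢ V ×ˢ W))
    (hE0 : ∀ t ∈ I, ∀ x ∈ V, ∀ y ∈ W, 0 ≤ E t x y)
    (hE1 : ∀ t ∈ I, ∀ x ∈ V, ∀ y ∈ W, E t x y ≤ 1) :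
    IsMuUpperBoundFn μ I V W fun t x y => F t x y * E t x y := by
  obtain ⟨hFmeas, hUB1, hUB2, hUB3 : HasUB3 μ I V W F⟩ := hF
  refine ⟨hFmeas.mul hE.domRestrict.measurable, ?_, ?_, hUB3.mono fun t ht x hx y hy =>
    mul_le_of_le_one_right (hF0 t ht x hx y hy) (hE1 t ht x hx y hy)⟩
  · rintro t ht x hx y hy ⟨s₀, hs₀, hts₀⟩
    set l := 𝓝[I ∩ Ioi t] t
    have : l.NeBot := by
      refine (mem_closure_iff_nhdsWithin_neBot.1 ?_ : (𝓝[Ioo t s₀] t).NeBot).mono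
        (nhdsWithin_mono t fun s hs => ⟨hI.out ht hs₀ (Ioo_subset_Icc_self hs), hs.1⟩)
      rw [closure_Ioo hts₀.ne]
      exact left_mem_Icc.2 hts₀.le
    have hmem : ∀ᶠ s in l, s ∈ I := eventually_nhdsWithin_of_forall fun s hs => hs.1
    have hEt : Tendsto (fun s => E s x y) l (𝓝 (E t x y)) :=
      ((hE.comp (f := fun s => (s, x, y)) (by fun_prop) fun s hs => ⟨hs, hx, hy⟩) t ht).mono
        inter_subset_left
    have hF0' : ∀ᶠ s in l, 0 ≤ F s x y := hmem.mono fun s hs => hF0 s hs x hx y hy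
    have hFbdd : IsBoundedUnder (· ≤ ·) l fun s => F s x y :=
      (hUB3.isBoundedUnder_le ht hx hy).mono (nhdsWithin_mono t inter_subset_left)
    calc limsup (fun s => F s x y * E s x y) l
        ≤ limsup (fun s => F s x y) l * limsup (fun s => E s x y) l :=
          limsup_mul_le hF0'.frequently hFbdd (hmem.mono fun s hs => hE0 s hs x hx y hy)
            hEt.isBoundedUnder_le
      _ = limsup (fun s => F s x y) l * E t x y := by rw [hEt.limsup_eq]
      _ ≤ F t x y * E t x y :=
          mul_le_mul_of_nonneg_right (hUB1 t ht x hx y hy ⟨s₀, hs₀, hts₀⟩) (hE0 t ht x hx y hy)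
  · intro t ht y hy x hx
    have hEx : ContinuousWithinAt (fun x => E t x y) V x :=
      hE.comp (f := fun z => (t, z, y)) (by fun_prop) (fun z hz => ⟨ht, hz, hy⟩) x hx
    exact UpperSemicontinuousWithinAt.mul_continuousWithinAt (hUB2 t ht y hy x hx) hEx
      (eventually_nhdsWithin_of_forall fun z hz => hF0 t ht z hz y hy)
      (eventually_nhdsWithin_of_forall fun z hz => hE0 t ht z hz y hy)

/-- Condition (DB)_Ψ. -/
def DoublingCondition {M : Type*} [MetricSpace M] (Ψ : ℝ≥0 → ℝ≥0) (I : Set ℝ) (V W : Set M)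
    (F : ℝ → M → M → ℝ) (α C : ℝ) : Prop :=
  ∀ t ∈ I, ∀ x ∈ V, ∀ y ∈ W, ∀ s ∈ I, ∀ z ∈ V, ∀ w ∈ W, s ≤ t →
    F s z w / F t x y ≤ C * ((max (max t (Ψ (nndist x z) : ℝ)) (Ψ (nndist y w) : ℝ)) / s) ^ α

theorem DoublingCondition.le_mul_rpow {M : Type*} [MetricSpace M] {Ψ : ℝ≥0 → ℝ≥0} {I : Set ℝ}
    {V W : Set M} {F : ℝ → M → M → ℝ} {α C : ℝ} (hDB : DoublingCondition Ψ I V W F α C)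
    (hI : I ⊆ Ioi 0) (hFpos : ∀ t ∈ I, ∀ x ∈ V, ∀ y ∈ W, 0 < F t x y) (hα : 0 ≤ α) (hC : 0 ≤ C)
    {t s : ℝ} {x z y w : M} (ht : t ∈ I) (hx : x ∈ V) (hy : y ∈ W) (hs : s ∈ I) (hz : z ∈ V)
    (hw : w ∈ W) (hst : s ≤ t) {A B : ℝ} (htA : t ≤ A) (hxz : (Ψ (nndist x z) : ℝ) ≤ A)
    (hyw : (Ψ (nndist y w) : ℝ) ≤ A) (hsB : s⁻¹ ≤ B) :
    F s z w ≤ C * (A * B) ^ α * F t x y := by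
  have hFt := hFpos t ht x hx y hy
  have hmax : max (max t (Ψ (nndist x z) : ℝ)) (Ψ (nndist y w) : ℝ) / s ≤ A * B := by
    rw [div_eq_mul_inv]
    exact mul_le_mul (max_le (max_le htA hxz) hyw) hsB (inv_nonneg.2 (hI hs).le)
      ((hI ht).le.trans htA)
  have hmax0 : 0 ≤ max (max t (Ψ (nndist x z) : ℝ)) (Ψ (nndist y w) : ℝ) / s :=
    div_nonneg ((hI ht).le.trans ((le_max_left _ _).trans (le_max_left _ _))) (hI hs).le
  calc F s z w = F s z w / F t x y * F t x y := by field_simp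
    _ ≤ C * (max (max t (Ψ (nndist x z) : ℝ)) (Ψ (nndist y w) : ℝ) / s) ^ α * F t x y :=
        mul_le_mul_of_nonneg_right (hDB t ht x hx y hy s hs z hz w hw hst) hFt.le
    _ ≤ C * (A * B) ^ α * F t x y :=
        mul_le_mul_of_nonneg_right (mul_le_mul_of_nonneg_left (Real.rpow_le_rpow hmax0 hmax hα) hC)
          hFt.le

theorem hasUB3_of_not_nonempty {M : Type*} [MetricSpace M] [MeasurableSpace M]
    [OpensMeasurableSpace M] (μ : Measure M) {I : Set ℝ} {V W : Set M} (hV : IsOpen V)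
    (hW : IsOpen W) {G : ℝ → M → M → ℝ} (hne : ¬(I.Nonempty ∧ V.Nonempty ∧ W.Nonempty)) :
    HasUB3 μ I V W G := by
  refine ⟨fun _ _ => 0, fun _ => I, fun _ => V, fun _ => W, fun _ => measurable_const,
    fun _ _ => le_rfl, fun _ => ⟨Subset.rfl, univ, isOpen_univ, (univ_inter I).symm⟩,
    fun _ => ⟨Subset.rfl, hV⟩, fun _ => ⟨Subset.rfl, hW.measurableSet⟩,
    monotone_const, monotone_const, monotone_const, iUnion_const _, iUnion_const _,
    iUnion_const _, fun _ => by simp, fun _ t ht x hx y hy => ?_⟩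
  exact absurd ⟨⟨t, ht⟩, ⟨x, hx⟩, ⟨y, hy⟩⟩ hne

theorem exists_relOpen_exhaustion_of_subset_Ioi {I : Set ℝ} (hI : I ⊆ Ioi 0) (hne : I.Nonempty) :
    ∃ (T : ℕ → ℝ) (In : ℕ → Set ℝ), (∀ n, T n ∈ I) ∧
      (∀ n, In n ⊆ I ∧ ∃ U : Set ℝ, IsOpen U ∧ In n = U ∩ I) ∧ Monotone In ∧
      (⋃ n, In n) = I ∧ ∀ n, ∀ s ∈ In n, s⁻¹ ≤ n + 1 ∧ s ≤ T n := by
  obtain ⟨T, U, hTI, hU, hUmono, hIU, hUT⟩ := exists_relOpen_exhaustion_le hne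
  have hIoi : Monotone fun n : ℕ => Ioi (1 / ((n : ℝ) + 1)) := fun m n h =>
    Ioi_subset_Ioi (Nat.one_div_le_one_div h)
  refine ⟨T, fun n => U n ∩ Ioi (1 / ((n : ℝ) + 1)) ∩ I, hTI,
    fun n => ⟨inter_subset_right, _, (hU n).inter isOpen_Ioi, rfl⟩,
    fun m n h => inter_subset_inter_left _ (inter_subset_inter (hUmono h) (hIoi h)), ?_,
    fun n s ⟨⟨hsU, hsn⟩, hsI⟩ => ⟨?_, hUT n s ⟨hsU, hsI⟩⟩⟩
  · rw [← iUnion_inter, iUnion_inter_of_monotone hUmono hIoi]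
    exact inter_eq_right.2 fun s hs =>
      ⟨hIU hs, mem_iUnion.2 (exists_nat_one_div_lt (mem_Ioi.1 (hI hs)))⟩
  · rw [inv_le_comm₀ (hI hsI) (by positivity), ← one_div]
    exact (mem_Ioi.1 hsn).le

theorem hasUB3_of_doublingCondition {M : Type*} [MetricSpace M] [MeasurableSpace M] [BorelSpace M]
    [WeaklyLocallyCompactSpace M] [SigmaCompactSpace M] (μ : Measure M)
    [IsFiniteMeasureOnCompacts μ] {Ψ : ℝ≥0 → ℝ≥0} {c β : ℝ} (hΨ : HasLowerScaling Ψ c β)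
    (hc : 0 < c) (hβ : 0 ≤ β) (hsurj : Function.Surjective Ψ) {I : Set ℝ} (hI : I ⊆ Ioi 0)
    {V W : Set M} (hV : IsOpen V) (hW : IsOpen W) {F : ℝ → M → M → ℝ}
    (hFpos : ∀ t ∈ I, ∀ x ∈ V, ∀ y ∈ W, 0 < F t x y) {α C : ℝ} (hα : 0 ≤ α) (hC : 0 ≤ C)
    (hDB : DoublingCondition Ψ I V W F α C) : HasUB3 μ I V W F := by
  by_cases hne : I.Nonempty ∧ V.Nonempty ∧ W.Nonempty
  swap
  · exact hasUB3_of_not_nonempty μ hV hW hne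
  obtain ⟨hIne, ⟨x₀, hx₀⟩, ⟨y₀, hy₀⟩⟩ := hne
  obtain ⟨T, In, hTI, hIn, hInmono, hInU, hInT⟩ := exists_relOpen_exhaustion_of_subset_Ioi hI hIne
  let K := CompactExhaustion.choice M
  let A : ℕ → ℝ := fun n => max (T n) (c * Ψ n)
  have hΨA : ∀ {n : ℕ} {a b : M}, dist b a ≤ n → (Ψ (nndist a b) : ℝ) ≤ A n := fun h =>
    (hΨ.psi_le_mul hc hβ hsurj (by rwa [← NNReal.coe_le_coe, coe_nndist, dist_comm])).trans
      (le_max_right _ _)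
  refine ⟨fun n _ => C * (A n * (n + 1)) ^ α * F (T n) x₀ y₀, In, fun n => V ∩ Metric.ball x₀ n,
    fun n => W ∩ (K n ∩ Metric.closedBall y₀ n), fun _ => measurable_const,
    fun n _ => by have := hFpos _ (hTI n) _ hx₀ _ hy₀; positivity, hIn,
    fun n => ⟨inter_subset_left, hV.inter Metric.isOpen_ball⟩,
    fun n => ⟨inter_subset_left, hW.measurableSet.inter
      ((K.isCompact n).measurableSet.inter Metric.isClosed_closedBall.measurableSet)⟩, hInmono,
    fun m n h => inter_subset_inter_right _ (Metric.ball_subset_ball (by exact_mod_cast h)),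
    fun m n h => inter_subset_inter_right _ (inter_subset_inter (K.subset h)
      (Metric.closedBall_subset_closedBall (by exact_mod_cast h))), hInU, ?_, ?_, ?_, ?_⟩
  · rw [← inter_iUnion, Metric.iUnion_ball_nat, inter_univ]
  · rw [← inter_iUnion, iUnion_inter_of_monotone K.subset
      fun m n h => Metric.closedBall_subset_closedBall (by exact_mod_cast h), K.iUnion_eq,
      Metric.iUnion_closedBall_nat, inter_univ, inter_univ]
  · intro n
    rw [setLIntegral_const]
    exact ENNReal.mul_lt_top ENNReal.ofReal_lt_top
      ((measure_mono fun y hy => hy.2.1).trans_lt (K.isCompact n).measure_lt_top)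
  · rintro n s hs z ⟨hzV, hz⟩ w ⟨hwW, -, hw⟩
    exact hDB.le_mul_rpow hI hFpos hα hC (hTI n) hx₀ hy₀ ((hIn n).1 hs) hzV hwW (hInT n s hs).2
      (le_max_left _ _) (hΨA (Metric.mem_ball.1 hz).le) (hΨA (Metric.mem_closedBall.1 hw))
      (hInT n s hs).1

theorem dynkin_hunt_stmt7_general {M : Type*} [MetricSpace M] [LocallyCompactSpace M]
    [TopologicalSpace.SeparableSpace M] [MeasurableSpace M] [BorelSpace M]
    (μ : Measure M) [IsFiniteMeasureOnCompacts μ]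
    (Ψ : ℝ≥0 ≃ₜ ℝ≥0) (cΨ β₁ β₂ : ℝ)
    (hcΨ : 0 < cΨ) (hβ₁ : 1 < β₁)
    (hΨ : ∀ r R : ℝ≥0, 0 < r → r ≤ R →
      cΨ⁻¹ * ((R : ℝ) / (r : ℝ)) ^ β₁ ≤ ((Ψ R : ℝ≥0) : ℝ) / ((Ψ r : ℝ≥0) : ℝ) ∧
      ((Ψ R : ℝ≥0) : ℝ) / ((Ψ r : ℝ≥0) : ℝ) ≤ cΨ * ((R : ℝ) / (r : ℝ)) ^ β₂)
    (Φ : ℝ≥0 → ℝ → ℝ)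
    (hΦ : ∀ (R : ℝ≥0) (t : ℝ), Φ R t = ⨆ r : {r : ℝ≥0 // 0 < r},
      ((R : ℝ) / (r.1 : ℝ) - t / ((Ψ r.1 : ℝ≥0) : ℝ)))
    (I : Set ℝ) (hI : I ⊆ Set.Ioi 0) (hIord : I.OrdConnected)
    (V W : Set M) (hV : IsOpen V) (hW : IsOpen W)
    (F : ℝ → M → M → ℝ)
    (hFpos : ∀ t ∈ I, ∀ x ∈ V, ∀ y ∈ W, 0 < F t x y)
    (hFmeas : Measurable fun p : (I ×ˢ (V ×ˢ W) : Set (ℝ × M × M)) =>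
      F (p : ℝ × M × M).1 (p : ℝ × M × M).2.1 (p : ℝ × M × M).2.2)
    (hUB1 : ∀ t ∈ I, ∀ x ∈ V, ∀ y ∈ W, (∃ s ∈ I, t < s) →
      Filter.limsup (fun s => F s x y) (nhdsWithin t (I ∩ Set.Ioi t)) ≤ F t x y)
    (hUB2 : ∀ t ∈ I, ∀ y ∈ W, UpperSemicontinuousOn (fun x => F t x y) V)
    (αF cF : ℝ) (hαF : 0 < αF) (hcF : 0 < cF)
    (hDB : ∀ t ∈ I, ∀ x ∈ V, ∀ y ∈ W, ∀ s ∈ I, ∀ z ∈ V, ∀ w ∈ W, s ≤ t →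
      F s z w / F t x y ≤
        cF * ((max (max t ((Ψ (nndist x z) : ℝ≥0) : ℝ)) ((Ψ (nndist y w) : ℝ≥0) : ℝ)) / s) ^ αF)
    (c₁ : ℝ) (hc₁ : 0 < c₁) (c₂ : ℝ≥0) :
    IsMuUpperBoundFn μ I V W F ∧
    IsMuUpperBoundFn μ I V W
      (fun t x y => F t x y * Real.exp (-(c₁ * Φ (c₂ * nndist x y) t))) := by
  have : SecondCountableTopology M := UniformSpace.secondCountable_of_separable M
  have hΨ' : HasLowerScaling Ψ cΨ β₁ := fun r R hr hrR => (hΨ r R hr hrR).1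
  have hΦ' : ∀ R t, Φ R t = psiTransform Ψ (R, t) := hΦ
  have hF : IsMuUpperBoundFn μ I V W F := ⟨hFmeas, hUB1, hUB2, hasUB3_of_doublingCondition μ hΨ'
    hcΨ (by linarith) Ψ.surjective hI hV hW hFpos hαF.le hcF.le hDB⟩
  have hΦ0 : ∀ t ∈ I, ∀ x y : M, 0 ≤ Φ (c₂ * nndist x y) t := fun t ht x y => by
    rw [hΦ']; exact psiTransform_nonneg hΨ' hcΨ hβ₁ Ψ.surjective (NNReal.coe_nonneg _) (hI ht)
  refine ⟨hF, hF.mul hIord (fun t ht x hx y hy => (hFpos t ht x hx y hy).le) ?_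
    (fun _ _ _ _ _ _ => (Real.exp_pos _).le) fun t ht x _ y _ =>
      Real.exp_le_one_iff.2 (neg_nonpos.2 (mul_nonneg hc₁.le (hΦ0 t ht x y)))⟩
  simp only [hΦ']
  exact Real.continuous_exp.comp_continuousOn ((continuousOn_const.mul
    ((continuousOn_psiTransform hΨ' hcΨ hβ₁).comp (by fun_prop)
      fun p hp => ⟨mem_univ _, hI hp.1⟩)).neg)

/-- If `F : I × V × W → (0,∞)` is Borel measurable and satisfies (UB1), (UB2) and (DB)_Ψ,
then both `F` and `H_t(x,y) := F_t(x,y) exp(-c₁ Φ(c₂ d(x,y), t))` are `μ`-upper bound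
functions on `I × V × W`, where `Φ(R,t) = sup_{r>0} (R/r - t/Ψ(r))`. -/
theorem dynkin_hunt_stmt7 {M : Type*} [MetricSpace M] [LocallyCompactSpace M]
    [TopologicalSpace.SeparableSpace M] [MeasurableSpace M] [BorelSpace M]
    (μ : Measure M) [IsFiniteMeasureOnCompacts μ]
    (Ψ : ℝ≥0 ≃ₜ ℝ≥0) (cΨ β₁ β₂ : ℝ)
    (hcΨ : 0 < cΨ) (hβ₁ : 1 < β₁) (hβ₁₂ : β₁ ≤ β₂)
    (hΨ : ∀ r R : ℝ≥0, 0 < r → r ≤ R →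
      cΨ⁻¹ * ((R : ℝ) / (r : ℝ)) ^ β₁ ≤ ((Ψ R : ℝ≥0) : ℝ) / ((Ψ r : ℝ≥0) : ℝ) ∧
      ((Ψ R : ℝ≥0) : ℝ) / ((Ψ r : ℝ≥0) : ℝ) ≤ cΨ * ((R : ℝ) / (r : ℝ)) ^ β₂)
    (Φ : ℝ≥0 → ℝ → ℝ)
    (hΦ : ∀ (R : ℝ≥0) (t : ℝ), Φ R t = ⨆ r : {r : ℝ≥0 // 0 < r},
      ((R : ℝ) / (r.1 : ℝ) - t / ((Ψ r.1 : ℝ≥0) : ℝ)))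
    (I : Set ℝ) (hI : I ⊆ Set.Ioi 0) (hIord : I.OrdConnected)
    (V W : Set M) (hV : IsOpen V) (hW : IsOpen W)
    (F : ℝ → M → M → ℝ)
    (hFpos : ∀ t ∈ I, ∀ x ∈ V, ∀ y ∈ W, 0 < F t x y)
    (hFmeas : Measurable fun p : (I ×ˢ (V ×ˢ W) : Set (ℝ × M × M)) =>
      F (p : ℝ × M × M).1 (p : ℝ × M × M).2.1 (p : ℝ × M × M).2.2)
    (hUB1 : ∀ t ∈ I, ∀ x ∈ V, ∀ y ∈ W, (∃ s ∈ I, t < s) →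
      Filter.limsup (fun s => F s x y) (nhdsWithin t (I ∩ Set.Ioi t)) ≤ F t x y)
    (hUB2 : ∀ t ∈ I, ∀ y ∈ W, UpperSemicontinuousOn (fun x => F t x y) V)
    (αF cF : ℝ) (hαF : 0 < αF) (hcF : 0 < cF)
    (hDB : ∀ t ∈ I, ∀ x ∈ V, ∀ y ∈ W, ∀ s ∈ I, ∀ z ∈ V, ∀ w ∈ W, s ≤ t →
      F s z w / F t x y ≤
        cF * ((max (max t ((Ψ (nndist x z) : ℝ≥0) : ℝ)) ((Ψ (nndist y w) : ℝ≥0) : ℝ)) / s) ^ αF)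
    (c₁ : ℝ) (hc₁ : 0 < c₁) (c₂ : ℝ≥0) (hc₂ : 0 < c₂) :
    IsMuUpperBoundFn μ I V W F ∧
    IsMuUpperBoundFn μ I V W
      (fun t x y => F t x y * Real.exp (-(c₁ * Φ (c₂ * nndist x y) t))) :=
  dynkin_hunt_stmt7_general μ Ψ cΨ β₁ β₂ hcΨ hβ₁ hΨ Φ hΦ I hI hIord V W hV hW F hFpos hFmeas hUB1
    hUB2 αF cF hαF hcF hDB c₁ hc₁ c₂
end

section
/- Let R ∈ (0,∞], let V, W be open subsets of M with diam V ≤ R and diam W ≤ R, and let ν be a Borel measure on M satisfying the volume doubling property 0 < ν(B(x,2r)) ≤ c_vd ν(B(x,r)) < ∞ for all (x,r) ∈ (V ∪ W) × (0,R), for some constant c_vd ∈ (0,∞). For c₄ ∈ (0,∞) define F : (0,Ψ(R)] × V × W → (0,∞) (with time interval (0,∞) when R = ∞) by F_t(x,y) := c₄ ν(B(x,Ψ^{-1}(t)))^{−1/2} ν(B(y,Ψ^{-1}(t)))^{−1/2}. Then F is upper semicontinuous on its domain (hence Borel measurable and satisfies (UB1) and (UB2)) and F satisfies (DB)_Ψ: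 there exist α_F, c_F ∈ (0,∞) such that for any (t,x,y), (s,z,w) in the domain with s ≤ t, F_s(z,w)/F_t(x,y) ≤ c_F ( (t ∨ Ψ(d(x,z)) ∨ Ψ(d(y,w))) / s )^{α_F}. -/
open scoped NNReal ENNReal
open MeasureTheory Set Filter Topology Metric

/-!
The volume of an open ball is lower semicontinuous in (centre, radius): it is continuous from
below in the radius, and `B(x, r') ⊆ B(y, r)` as soon as `d(x, y) + r' < r`. Since
`u ↦ u^{-1/2}` is continuous and decreasing, `F` is upper semicontinuous on the set where the
ball volumes are positive and finite, and (UB1), (UB2) and Borel measurability follow.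

For (DB)_Ψ put `T = t ∨ Ψ(d(x,z)) ∨ Ψ(d(y,w))`. Then `B(x, Ψ⁻¹ t) ⊆ B(z, 2 Ψ⁻¹ T)`, and the lower
scaling of `Ψ` gives `Ψ⁻¹ T / Ψ⁻¹ s ≤ (c_Ψ T / s)^{1/β₁}`, so about `log₂ (c_Ψ T / s)^{1/β₁}`
doublings, all at radii below `R`, give
`ν(B(x, Ψ⁻¹ t)) ≤ c_vd^{n+1} ν(B(z, Ψ⁻¹ s)) ≲ (T / s)^{m/β₁} ν(B(z, Ψ⁻¹ s))` when `c_vd ≤ 2^m`;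
likewise for `y, w`.
-/

section BallMeasure

variable {M : Type*} [PseudoMetricSpace M] [MeasurableSpace M] (ν : Measure M)

theorem measure_ball_eq_iSup_lt (x : M) (r : ℝ) : ν (ball x r) = ⨆ r' < r, ν (ball x r') := by
  refine le_antisymm ?_ (iSup₂_le fun r' hr' => measure_mono (ball_subset_ball hr'.le))
  have hunion : ball x r = ⋃ n : ℕ, ball x (r - 1 / (n + 1)) := by
    refine Subset.antisymm (fun y hy => ?_)
      (iUnion_subset fun n => ball_subset_ball (sub_le_self _ (by positivity)))
    obtain ⟨n, hn⟩ := exists_nat_one_div_lt (sub_pos.2 (mem_ball.1 hy))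
    exact mem_iUnion.2 ⟨n, mem_ball.2 (by linarith)⟩
  have hmono : Monotone fun n : ℕ => ball x (r - 1 / (n + 1)) := fun m n hmn =>
    ball_subset_ball (by gcongr)
  rw [hunion, hmono.measure_iUnion]
  exact iSup_le fun n => le_iSup₂_of_le (r - 1 / (n + 1)) (sub_lt_self _ (by positivity)) le_rfl

theorem exists_lt_measure_ball_of_lt {x : M} {r : ℝ} {m : ℝ≥0∞} (h : m < ν (ball x r)) :
    ∃ r' < r, m < ν (ball x r') := by
  rw [measure_ball_eq_iSup_lt] at h
  simpa only [lt_iSup_iff, exists_prop] using h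

theorem measure_ball_le_of_forall_lt {x : M} {r : ℝ} {L : ℝ≥0∞}
    (h : ∀ r' < r, ν (ball x r') ≤ L) : ν (ball x r) ≤ L := by
  rw [measure_ball_eq_iSup_lt]
  exact iSup₂_le h

theorem lowerSemicontinuous_measure_ball :
    LowerSemicontinuous fun p : M × ℝ => ν (ball p.1 p.2) := by
  rintro ⟨x, r⟩ m hm
  obtain ⟨r', hr', hm'⟩ := exists_lt_measure_ball_of_lt ν hm
  have hopen : IsOpen {p : M × ℝ | dist p.1 x + r' < p.2} :=
    isOpen_lt (by fun_prop) continuous_snd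
  filter_upwards [hopen.mem_nhds (by simpa using hr')] with p (hp : dist p.1 x + r' < p.2)
  have hsub : ball x r' ⊆ ball p.1 p.2 := ball_subset_ball' (by rw [dist_comm]; linarith)
  exact hm'.trans_le (measure_mono hsub)

end BallMeasure

section Doubling

variable {M : Type*} [PseudoMetricSpace M] [MeasurableSpace M] {ν : Measure M}
  {R c : ℝ≥0∞}

theorem measure_ball_two_pow_le {x : M}
    (hd : ∀ r : ℝ, 0 < r → ENNReal.ofReal r < R → ν (ball x (2 * r)) ≤ c * ν (ball x r))
    {r : ℝ} (hr : 0 < r) : ∀ n : ℕ, ENNReal.ofReal (2 ^ n * r) < R →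
      ν (ball x (2 ^ (n + 1) * r)) ≤ c ^ (n + 1) * ν (ball x r)
  | 0, h => by simpa using hd r hr (by simpa using h)
  | n + 1, h => by
    have hn : ENNReal.ofReal (2 ^ n * r) < R :=
      lt_of_le_of_lt (ENNReal.ofReal_le_ofReal (by gcongr <;> norm_num)) h
    calc ν (ball x (2 ^ (n + 2) * r)) = ν (ball x (2 * (2 ^ (n + 1) * r))) := by ring_nf
      _ ≤ c * ν (ball x (2 ^ (n + 1) * r)) := hd _ (by positivity) h
      _ ≤ c * (c ^ (n + 1) * ν (ball x r)) := by
        gcongr; exact measure_ball_two_pow_le hd hr n hn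
      _ = c ^ (n + 2) * ν (ball x r) := by ring

/-- The doubling condition is only available at radii below `R`, which may equal `ρ`; the ball
`B(y, 2ρ)` is therefore exhausted by smaller balls before doubling down to radius `r'`. -/
theorem measure_ball_le_pow_mul_measure_ball {x y : M}
    (hd : ∀ r : ℝ, 0 < r → ENNReal.ofReal r < R → ν (ball y (2 * r)) ≤ c * ν (ball y r))
    {r ρ r' : ℝ} (n : ℕ) (hr : r ≤ ρ) (hxy : dist x y ≤ ρ) (hρ : ρ ≤ 2 ^ n * r')
    (hρR : ENNReal.ofReal ρ ≤ R) : ν (ball x r) ≤ c ^ (n + 1) * ν (ball y r') := by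
  refine (measure_mono (ball_subset_ball' (by linarith : r + dist x y ≤ 2 * ρ))).trans ?_
  refine measure_ball_le_of_forall_lt ν fun ρ' hρ' => ?_
  rcases le_or_gt ρ' 0 with hρ'0 | hρ'0
  · simp [ball_eq_empty.2 hρ'0]
  have hsmall : ENNReal.ofReal (2 ^ n * (ρ' / 2 ^ (n + 1))) < R := by
    refine lt_of_lt_of_le ((ENNReal.ofReal_lt_ofReal_iff (by linarith)).2 ?_) hρR
    rw [pow_succ]; field_simp; linarith
  calc ν (ball y ρ') = ν (ball y (2 ^ (n + 1) * (ρ' / 2 ^ (n + 1)))) := by field_simp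
    _ ≤ c ^ (n + 1) * ν (ball y (ρ' / 2 ^ (n + 1))) :=
      measure_ball_two_pow_le hd (by positivity) n hsmall
    _ ≤ c ^ (n + 1) * ν (ball y r') := by
      gcongr
      rw [div_le_iff₀ (by positivity), pow_succ]
      linarith

theorem measure_ball_mul_le_pow_mul_measure_ball_mul {x y z w : M}
    (hdz : ∀ r : ℝ, 0 < r → ENNReal.ofReal r < R → ν (ball z (2 * r)) ≤ c * ν (ball z r))
    (hdw : ∀ r : ℝ, 0 < r → ENNReal.ofReal r < R → ν (ball w (2 * r)) ≤ c * ν (ball w r))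
    {r ρ r' : ℝ} (n : ℕ) (hr : r ≤ ρ) (hxz : dist x z ≤ ρ) (hyw : dist y w ≤ ρ)
    (hρ : ρ ≤ 2 ^ n * r') (hρR : ENNReal.ofReal ρ ≤ R) :
    ν (ball x r) * ν (ball y r) ≤ (c ^ (n + 1)) ^ 2 * (ν (ball z r') * ν (ball w r')) := by
  calc ν (ball x r) * ν (ball y r)
      ≤ (c ^ (n + 1) * ν (ball z r')) * (c ^ (n + 1) * ν (ball w r')) :=
        mul_le_mul' (measure_ball_le_pow_mul_measure_ball hdz n hr hxz hρ hρR)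
          (measure_ball_le_pow_mul_measure_ball hdw n hr hyw hρ hρR)
    _ = (c ^ (n + 1)) ^ 2 * (ν (ball z r') * ν (ball w r')) := by ring

theorem measure_ball_ne_zero_ne_top {x : M}
    (h : ∀ r : ℝ, 0 < r → ENNReal.ofReal r < R → 0 < ν (ball x (2 * r)) ∧
      ν (ball x (2 * r)) ≤ c * ν (ball x r) ∧ ν (ball x r) < ⊤)
    (hc : c ≠ ⊤) {ρ : ℝ} (hρ : 0 < ρ) (hρR : ENNReal.ofReal ρ ≤ R) :
    ν (ball x ρ) ≠ 0 ∧ ν (ball x ρ) ≠ ⊤ := by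
  obtain ⟨h0, hdouble, hfin⟩ := h (ρ / 2) (by positivity)
    (((ENNReal.ofReal_lt_ofReal_iff hρ).2 (half_lt_self hρ)).trans_le hρR)
  rw [mul_div_cancel₀ ρ two_ne_zero] at h0 hdouble
  exact ⟨h0.ne', ne_top_of_le_ne_top (ENNReal.mul_ne_top hc hfin.ne) hdouble⟩

end Doubling

section Semicontinuity

variable {X : Type*} [TopologicalSpace X]

theorem LowerSemicontinuous.ennreal_mul {f g : X → ℝ≥0∞} (hf : LowerSemicontinuous f)
    (hg : LowerSemicontinuous g) : LowerSemicontinuous fun x => f x * g x := by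
  intro x m hm
  have hf0 : f x ≠ 0 := fun h => by simp [h] at hm
  have hg0 : g x ≠ 0 := fun h => by simp [h] at hm
  have hcont : ∀ᶠ p in 𝓝[<] (f x) ×ˢ 𝓝[<] (g x), m < p.1 * p.2 :=
    ((ENNReal.tendsto_mul (.inl hf0) (.inl hg0)).eventually (lt_mem_nhds hm)).filter_mono
      (nhds_prod_eq (x := f x) (y := g x) ▸ prod_mono nhdsWithin_le_nhds nhdsWithin_le_nhds)
  have := nhdsLT_neBot_of_exists_lt ⟨0, pos_iff_ne_zero.2 hf0⟩
  have := nhdsLT_neBot_of_exists_lt ⟨0, pos_iff_ne_zero.2 hg0⟩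
  obtain ⟨⟨u, v⟩, huv, hu, hv⟩ := (hcont.and (prod_mem_prod (self_mem_nhdsWithin (s := Iio _))
    (self_mem_nhdsWithin (s := Iio _)))).exists
  filter_upwards [hf x u hu, hg x v hv] with y hy hy'
  exact huv.trans_le (mul_le_mul' hy.le hy'.le)

theorem LowerSemicontinuous.upperSemicontinuousOn_mul_toReal_rpow {f : X → ℝ≥0∞}
    (hf : LowerSemicontinuous f) {s : Set X} (hs : ∀ x ∈ s, f x ≠ 0 ∧ f x ≠ ⊤) {c p : ℝ}
    (hc : 0 ≤ c) (hp : p < 0) : UpperSemicontinuousOn (fun x => c * (f x).toReal ^ p) s := by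
  intro x hx d hd
  have hu : 0 < (f x).toReal := ENNReal.toReal_pos (hs x hx).1 (hs x hx).2
  have hcont : ContinuousAt (fun u : ℝ => c * u ^ p) (f x).toReal :=
    continuousAt_const.mul (Real.continuousAt_rpow_const _ _ (.inl hu.ne'))
  have hbelow : ∀ᶠ a in 𝓝[<] (f x).toReal, c * a ^ p < d ∧ 0 < a ∧ a < (f x).toReal :=
    ((hcont.eventually (gt_mem_nhds hd)).and (lt_mem_nhds hu)).filter_mono nhdsWithin_le_nhds
      |>.and self_mem_nhdsWithin |>.mono fun _ h => ⟨h.1.1, h.1.2, h.2⟩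
  obtain ⟨a, had, ha0, hax⟩ := hbelow.exists
  have hlt : ENNReal.ofReal a < f x := (ENNReal.ofReal_lt_iff_lt_toReal ha0.le (hs x hx).2).2 hax
  filter_upwards [nhdsWithin_le_nhds (hf x _ hlt), self_mem_nhdsWithin] with y hy hys
  have hay : a < (f y).toReal := (ENNReal.ofReal_lt_iff_lt_toReal ha0.le (hs y hys).2).1 hy
  exact (mul_le_mul_of_nonneg_left (Real.rpow_le_rpow_of_nonpos ha0 hay.le hp.le) hc).trans_lt had

/-- `hx` is needed when `𝓝[s] x = ⊥`: the `limsup` in `ℝ` is then `sInf univ = 0`. -/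
theorem UpperSemicontinuousWithinAt.limsup_le_of_nonneg {f : X → ℝ} {s : Set X} {x : X}
    (hf : UpperSemicontinuousWithinAt f s x) (hs : ∀ y ∈ s, 0 ≤ f y) (hx : 0 ≤ f x) :
    limsup f (𝓝[s] x) ≤ f x := by
  rcases (𝓝[s] x).eq_or_neBot with hbot | hne
  · simpa [hbot, limsup_eq] using hx
  refine le_of_forall_gt_imp_ge_of_dense fun c hc =>
    limsup_le_of_le ?_ ((hf c hc).mono fun _ => le_of_lt)
  exact isCoboundedUnder_le_of_eventually_le _ (eventually_mem_nhdsWithin.mono hs)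

end Semicontinuity

theorem exists_le_two_pow_and_pow_succ_le {c Q : ℝ} {m : ℕ} (hc0 : 0 ≤ c) (hc : c ≤ 2 ^ m)
    (hQ : 1 ≤ Q) : ∃ n : ℕ, Q ≤ 2 ^ n ∧ c ^ (n + 1) ≤ 4 ^ m * Q ^ m := by
  obtain ⟨k, hkQ, hQk⟩ := exists_nat_pow_near hQ one_lt_two
  refine ⟨k + 1, hQk.le, ?_⟩
  calc c ^ (k + 1 + 1) ≤ (2 ^ m) ^ (k + 2) := by gcongr
    _ = 4 ^ m * (2 ^ k) ^ m := by
      rw [show (4 : ℝ) = 2 ^ 2 by norm_num, ← pow_mul, ← pow_mul, ← pow_mul, ← pow_add]; ring_nf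
    _ ≤ 4 ^ m * Q ^ m := by gcongr

theorem rpow_neg_half_le_mul_of_le_sq_mul {a b K : ℝ} (ha : 0 < a) (hK : 0 ≤ K)
    (h : a ≤ K ^ 2 * b) : b ^ (-(2⁻¹ : ℝ)) ≤ K * a ^ (-(2⁻¹ : ℝ)) := by
  have hb : 0 < b := pos_of_mul_pos_right (ha.trans_le h) (sq_nonneg K)
  have hsqrt : √a ≤ K * √b := by
    simpa [Real.sqrt_mul' _ hb.le, Real.sqrt_sq hK] using Real.sqrt_le_sqrt h
  have hhalf (u : ℝ) : u ^ (2⁻¹ : ℝ) = √u := by rw [Real.sqrt_eq_rpow, one_div]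
  rw [Real.rpow_neg ha.le, Real.rpow_neg hb.le, hhalf, hhalf, ← div_eq_mul_inv,
    le_div_iff₀ (Real.sqrt_pos.2 ha), inv_mul_le_iff₀ (Real.sqrt_pos.2 hb), mul_comm]
  exact hsqrt

namespace Homeomorph

variable (Ψ : ℝ≥0 ≃ₜ ℝ≥0)

theorem strictMono_nnreal : StrictMono Ψ := by
  refine (Ψ.continuous.strictMono_of_inj Ψ.injective).resolve_right fun hanti => ?_
  obtain ⟨x, hx⟩ := Ψ.surjective (Ψ 0 + 1)
  exact (lt_add_one (Ψ 0)).not_ge (hx ▸ hanti.antitone (zero_le : 0 ≤ x))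

theorem map_zero_nnreal : Ψ 0 = 0 := by
  obtain ⟨x, hx⟩ := Ψ.surjective 0
  exact nonpos_iff_eq_zero.1 ((Ψ.strictMono_nnreal.monotone (zero_le : 0 ≤ x)).trans_eq hx)

theorem pos_iff_nnreal {t : ℝ≥0} : 0 < Ψ t ↔ 0 < t := by
  rw [← Ψ.map_zero_nnreal, Ψ.strictMono_nnreal.lt_iff_lt, Ψ.map_zero_nnreal]

theorem coe_le_ite_iff_symm_le {t : ℝ≥0} {R : ℝ≥0∞} :
    (t : ℝ≥0∞) ≤ (if R = ⊤ then ⊤ else ((Ψ R.toNNReal : ℝ≥0) : ℝ≥0∞)) ↔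
      ((Ψ.symm t : ℝ≥0) : ℝ≥0∞) ≤ R := by
  split_ifs with hR
  · simp [hR]
  · rw [← ENNReal.coe_toNNReal hR, ENNReal.coe_le_coe, ENNReal.coe_le_coe,
      ← Ψ.symm.strictMono_nnreal.le_iff_le, symm_apply_apply, ENNReal.toNNReal_coe]

variable {Ψ} {cΨ β : ℝ}

theorem symm_div_symm_le_rpow (hcΨ : 0 < cΨ) (hβ : 0 < β)
    (hΨ : ∀ r R : ℝ≥0, 0 < r → r ≤ R → cΨ⁻¹ * ((R : ℝ) / r) ^ β ≤ (Ψ R : ℝ) / (Ψ r))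
    {s T : ℝ≥0} (hs : 0 < s) (hsT : s ≤ T) :
    (Ψ.symm T : ℝ) / (Ψ.symm s) ≤ (cΨ * (T / s)) ^ β⁻¹ := by
  have h := hΨ (Ψ.symm s) (Ψ.symm T) (Ψ.symm.pos_iff_nnreal.2 hs)
    (Ψ.symm.strictMono_nnreal.monotone hsT)
  rw [apply_symm_apply, apply_symm_apply, inv_mul_le_iff₀ hcΨ] at h
  exact (Real.le_rpow_inv_iff_of_pos (by positivity) (by positivity) hβ).2 h

theorem exists_symm_le_two_pow_mul_symm (hcΨ : 0 < cΨ) (hβ : 0 < β)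
    (hΨ : ∀ r R : ℝ≥0, 0 < r → r ≤ R → cΨ⁻¹ * ((R : ℝ) / r) ^ β ≤ (Ψ R : ℝ) / (Ψ r))
    {c : ℝ} {m : ℕ} (hc0 : 0 ≤ c) (hc : c ≤ 2 ^ m) {s T : ℝ≥0} (hs : 0 < s) (hsT : s ≤ T) :
    ∃ n : ℕ, (Ψ.symm T : ℝ) ≤ 2 ^ n * Ψ.symm s ∧
      c ^ (n + 1) ≤ 4 ^ m * cΨ ^ ((m : ℝ) / β) * ((T : ℝ) / s) ^ ((m : ℝ) / β) := by
  have hs' : (0 : ℝ) < Ψ.symm s := NNReal.coe_pos.2 (Ψ.symm.pos_iff_nnreal.2 hs)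
  have hratio := symm_div_symm_le_rpow hcΨ hβ hΨ hs hsT
  have hQ : 1 ≤ (cΨ * (T / s)) ^ β⁻¹ :=
    ((one_le_div hs').2 (Ψ.symm.strictMono_nnreal.monotone hsT)).trans hratio
  obtain ⟨n, hQn, hcn⟩ := exists_le_two_pow_and_pow_succ_le hc0 hc hQ
  refine ⟨n, (div_le_iff₀ hs').1 (hratio.trans hQn), hcn.trans_eq ?_⟩
  rw [← Real.rpow_natCast ((cΨ * (T / s)) ^ β⁻¹) m, ← Real.rpow_mul (by positivity),
    Real.mul_rpow hcΨ.le (by positivity), inv_mul_eq_div, mul_assoc]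

end Homeomorph

section VolumeBound

variable {M : Type*} [PseudoMetricSpace M] [MeasurableSpace M] (ν : Measure M)
  (Ψ : ℝ≥0 ≃ₜ ℝ≥0) (c₄ : ℝ)

/-- `F_t(x, y)`, with the two factors `ν(B(·, Ψ⁻¹ t))^{-1/2}` combined into one. -/
noncomputable def volumeBound (t : ℝ≥0) (x y : M) : ℝ :=
  c₄ * (ν (ball x (Ψ.symm t)) * ν (ball y (Ψ.symm t))).toReal ^ (-(2⁻¹ : ℝ))

variable {ν Ψ c₄}

theorem volumeBound_pos (hc₄ : 0 < c₄) {t : ℝ≥0} {x y : M}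
    (h : ν (ball x (Ψ.symm t)) * ν (ball y (Ψ.symm t)) ≠ 0 ∧
      ν (ball x (Ψ.symm t)) * ν (ball y (Ψ.symm t)) ≠ ⊤) :
    0 < volumeBound ν Ψ c₄ t x y :=
  mul_pos hc₄ (Real.rpow_pos_of_pos (ENNReal.toReal_pos h.1 h.2) _)

theorem upperSemicontinuousOn_volumeBound (hc₄ : 0 ≤ c₄) {D : Set (ℝ≥0 × M × M)}
    (hD : ∀ p ∈ D, ν (ball p.2.1 (Ψ.symm p.1)) * ν (ball p.2.2 (Ψ.symm p.1)) ≠ 0 ∧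
      ν (ball p.2.1 (Ψ.symm p.1)) * ν (ball p.2.2 (Ψ.symm p.1)) ≠ ⊤) :
    UpperSemicontinuousOn (fun p : ℝ≥0 × M × M => volumeBound ν Ψ c₄ p.1 p.2.1 p.2.2) D := by
  have hx := (lowerSemicontinuous_measure_ball ν).comp
    (g := fun p : ℝ≥0 × M × M => (p.2.1, ((Ψ.symm p.1 : ℝ≥0) : ℝ))) (by fun_prop)
  have hy := (lowerSemicontinuous_measure_ball ν).comp
    (g := fun p : ℝ≥0 × M × M => (p.2.2, ((Ψ.symm p.1 : ℝ≥0) : ℝ))) (by fun_prop)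
  exact (hx.ennreal_mul hy).upperSemicontinuousOn_mul_toReal_rpow hD hc₄ (by norm_num)

theorem volumeBound_le_mul_volumeBound (hc₄ : 0 ≤ c₄) {K : ℝ≥0} {s t : ℝ≥0} {x y z w : M}
    (h : ν (ball x (Ψ.symm t)) * ν (ball y (Ψ.symm t)) ≤
      (K : ℝ≥0∞) ^ 2 * (ν (ball z (Ψ.symm s)) * ν (ball w (Ψ.symm s))))
    (h0 : ν (ball x (Ψ.symm t)) * ν (ball y (Ψ.symm t)) ≠ 0)
    (htop : ν (ball z (Ψ.symm s)) * ν (ball w (Ψ.symm s)) ≠ ⊤) :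
    volumeBound ν Ψ c₄ s z w ≤ K * volumeBound ν Ψ c₄ t x y := by
  rw [volumeBound, volumeBound, mul_left_comm]
  generalize ν (ball x (Ψ.symm t)) * ν (ball y (Ψ.symm t)) = P at h h0
  generalize ν (ball z (Ψ.symm s)) * ν (ball w (Ψ.symm s)) = Q at h htop
  have hfin : (K : ℝ≥0∞) ^ 2 * Q ≠ ⊤ := ENNReal.mul_ne_top (by simp) htop
  refine mul_le_mul_of_nonneg_left (rpow_neg_half_le_mul_of_le_sq_mul ?_ K.coe_nonneg ?_) hc₄
  · exact ENNReal.toReal_pos h0 (ne_top_of_le_ne_top hfin h)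
  · simpa using ENNReal.toReal_mono hfin h

variable {S : Set M} {R : ℝ≥0∞}

theorem measure_ball_mul_ne_zero_ne_top
    (hball : ∀ x ∈ S, ∀ ρ : ℝ, 0 < ρ → ENNReal.ofReal ρ ≤ R →
      ν (ball x ρ) ≠ 0 ∧ ν (ball x ρ) ≠ ⊤)
    {t : ℝ≥0} (ht : 0 < t) (htR : ((Ψ.symm t : ℝ≥0) : ℝ≥0∞) ≤ R) {x y : M} (hx : x ∈ S)
    (hy : y ∈ S) :
    ν (ball x (Ψ.symm t)) * ν (ball y (Ψ.symm t)) ≠ 0 ∧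
      ν (ball x (Ψ.symm t)) * ν (ball y (Ψ.symm t)) ≠ ⊤ := by
  have hσ : (0 : ℝ) < Ψ.symm t := NNReal.coe_pos.2 (Ψ.symm.pos_iff_nnreal.2 ht)
  rw [← ENNReal.ofReal_coe_nnreal] at htR
  obtain ⟨hx0, hxtop⟩ := hball x hx _ hσ htR
  obtain ⟨hy0, hytop⟩ := hball y hy _ hσ htR
  exact ⟨mul_ne_zero hx0 hy0, ENNReal.mul_ne_top hxtop hytop⟩

theorem volumeBound_div_le (hc₄ : 0 < c₄) {cΨ β : ℝ} (hcΨ : 0 < cΨ) (hβ : 0 < β)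
    (hΨ : ∀ r R : ℝ≥0, 0 < r → r ≤ R → cΨ⁻¹ * ((R : ℝ) / r) ^ β ≤ (Ψ R : ℝ) / (Ψ r))
    {cvd : ℝ≥0} {m : ℕ} (hm : (cvd : ℝ) ≤ 2 ^ m)
    (hd : ∀ x ∈ S, ∀ r : ℝ, 0 < r → ENNReal.ofReal r < R →
      ν (ball x (2 * r)) ≤ cvd * ν (ball x r))
    (hball : ∀ x ∈ S, ∀ ρ : ℝ, 0 < ρ → ENNReal.ofReal ρ ≤ R →
      ν (ball x ρ) ≠ 0 ∧ ν (ball x ρ) ≠ ⊤)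
    {s t : ℝ≥0} {x y z w : M} (hs : 0 < s) (hst : s ≤ t)
    (htR : ((Ψ.symm t : ℝ≥0) : ℝ≥0∞) ≤ R) (hx : x ∈ S) (hy : y ∈ S) (hz : z ∈ S) (hw : w ∈ S)
    (hxz : edist x z ≤ R) (hyw : edist y w ≤ R) :
    volumeBound ν Ψ c₄ s z w / volumeBound ν Ψ c₄ t x y ≤
      4 ^ m * cΨ ^ ((m : ℝ) / β) *
        ((max (max (t : ℝ) ((Ψ (nndist x z) : ℝ≥0) : ℝ)) ((Ψ (nndist y w) : ℝ≥0) : ℝ)) / s) ^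
          ((m : ℝ) / β) := by
  set T := max (max t (Ψ (nndist x z))) (Ψ (nndist y w)) with hT
  have hσT : Ψ.symm T = max (max (Ψ.symm t) (nndist x z)) (nndist y w) := by
    simp only [hT, Ψ.symm.strictMono_nnreal.monotone.map_max, Homeomorph.symm_apply_apply]
  have htT : t ≤ T := le_max_of_le_left (le_max_left _ _)
  obtain ⟨n, hTs, hcvdn⟩ :=
    Ψ.exists_symm_le_two_pow_mul_symm hcΨ hβ hΨ cvd.coe_nonneg hm hs (hst.trans htT)
  have hTR : ENNReal.ofReal (Ψ.symm T) ≤ R := by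
    rw [ENNReal.ofReal_coe_nnreal, hσT]
    simpa [← edist_nndist] using ⟨⟨htR, hxz⟩, hyw⟩
  have hxz' : dist x z ≤ Ψ.symm T := by
    rw [dist_nndist, hσT]; exact_mod_cast le_max_of_le_left (le_max_right _ _)
  have hyw' : dist y w ≤ Ψ.symm T := by
    rw [dist_nndist, hσT]; exact_mod_cast le_max_right _ _
  have hprod := measure_ball_mul_le_pow_mul_measure_ball_mul (hd z hz) (hd w hw) n
    (NNReal.coe_le_coe.2 (Ψ.symm.strictMono_nnreal.monotone htT)) hxz' hyw' hTs hTR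
  have hpos_s := measure_ball_mul_ne_zero_ne_top hball hs
    ((ENNReal.coe_le_coe.2 (Ψ.symm.strictMono_nnreal.monotone hst)).trans htR) hz hw
  have hpos_t := measure_ball_mul_ne_zero_ne_top hball (hs.trans_le hst) htR hx hy
  rw [div_le_iff₀ (volumeBound_pos hc₄ hpos_t)]
  refine (volumeBound_le_mul_volumeBound (K := cvd ^ (n + 1)) hc₄.le (by simpa using hprod)
    hpos_t.1 hpos_s.2).trans (mul_le_mul_of_nonneg_right ?_ (volumeBound_pos hc₄ hpos_t).le)
  simpa [hT] using hcvdn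

end VolumeBound

theorem dynkin_hunt_stmt9_general {M : Type*} [MetricSpace M]
    [TopologicalSpace.SeparableSpace M] [MeasurableSpace M] [BorelSpace M]
    (Ψ : ℝ≥0 ≃ₜ ℝ≥0) (cΨ β₁ β₂ : ℝ)
    (hcΨ : 0 < cΨ) (hβ₁ : 1 < β₁)
    (hΨ : ∀ r R : ℝ≥0, 0 < r → r ≤ R →
      cΨ⁻¹ * ((R : ℝ) / (r : ℝ)) ^ β₁ ≤ ((Ψ R : ℝ≥0) : ℝ) / ((Ψ r : ℝ≥0) : ℝ) ∧
      ((Ψ R : ℝ≥0) : ℝ) / ((Ψ r : ℝ≥0) : ℝ) ≤ cΨ * ((R : ℝ) / (r : ℝ)) ^ β₂)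
    (R : ℝ≥0∞)
    (V W : Set M)
    (hdV : EMetric.diam V ≤ R) (hdW : EMetric.diam W ≤ R)
    (ν : Measure M) (cvd : ℝ≥0)
    (hν : ∀ x ∈ V ∪ W, ∀ r : ℝ, 0 < r → ENNReal.ofReal r < R →
      0 < ν (Metric.ball x (2 * r)) ∧
      ν (Metric.ball x (2 * r)) ≤ (cvd : ℝ≥0∞) * ν (Metric.ball x r) ∧
      ν (Metric.ball x r) < ⊤)
    (c₄ : ℝ) (hc₄ : 0 < c₄)
    (J : Set ℝ≥0)
    (hJ : J = {t : ℝ≥0 | 0 < t ∧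
      (t : ℝ≥0∞) ≤ if R = ⊤ then ⊤ else ((Ψ R.toNNReal : ℝ≥0) : ℝ≥0∞)})
    (F : ℝ≥0 → M → M → ℝ)
    (hF : ∀ (t : ℝ≥0) (x y : M), F t x y =
      c₄ * ((ν (Metric.ball x ((Ψ.symm t : ℝ≥0) : ℝ))).toReal) ^ (-(2⁻¹ : ℝ)) *
        ((ν (Metric.ball y ((Ψ.symm t : ℝ≥0) : ℝ))).toReal) ^ (-(2⁻¹ : ℝ))) :
    (∀ t ∈ J, ∀ x ∈ V, ∀ y ∈ W, 0 < F t x y) ∧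
    UpperSemicontinuousOn (fun p : ℝ≥0 × M × M => F p.1 p.2.1 p.2.2) (J ×ˢ (V ×ˢ W)) ∧
    (Measurable fun p : (J ×ˢ (V ×ˢ W) : Set (ℝ≥0 × M × M)) =>
      F (p : ℝ≥0 × M × M).1 (p : ℝ≥0 × M × M).2.1 (p : ℝ≥0 × M × M).2.2) ∧
    -- (UB1)
    (∀ t ∈ J, ∀ x ∈ V, ∀ y ∈ W, (∃ s ∈ J, t < s) →
      Filter.limsup (fun s => F s x y) (nhdsWithin t (J ∩ Set.Ioi t)) ≤ F t x y) ∧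
    -- (UB2)
    (∀ t ∈ J, ∀ y ∈ W, UpperSemicontinuousOn (fun x => F t x y) V) ∧
    -- (DB)_Ψ
    (∃ αF cF : ℝ, 0 < αF ∧ 0 < cF ∧
      ∀ t ∈ J, ∀ x ∈ V, ∀ y ∈ W, ∀ s ∈ J, ∀ z ∈ V, ∀ w ∈ W, s ≤ t →
        F s z w / F t x y ≤
          cF * ((max (max (t : ℝ) ((Ψ (nndist x z) : ℝ≥0) : ℝ)) ((Ψ (nndist y w) : ℝ≥0) : ℝ))
            / (s : ℝ)) ^ αF) := by
  obtain rfl : F = volumeBound ν Ψ c₄ := funext₃ fun t x y => by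
    rw [hF, volumeBound, ENNReal.toReal_mul, Real.mul_rpow ENNReal.toReal_nonneg
      ENNReal.toReal_nonneg, mul_assoc]
  have hJ' : ∀ t ∈ J, 0 < t ∧ ((Ψ.symm t : ℝ≥0) : ℝ≥0∞) ≤ R := fun t ht => by
    rw [hJ] at ht
    exact ⟨ht.1, Ψ.coe_le_ite_iff_symm_le.1 ht.2⟩
  have hball : ∀ x ∈ V ∪ W, ∀ ρ : ℝ, 0 < ρ → ENNReal.ofReal ρ ≤ R →
      ν (ball x ρ) ≠ 0 ∧ ν (ball x ρ) ≠ ⊤ :=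
    fun x hx _ => measure_ball_ne_zero_ne_top (hν x hx) ENNReal.coe_ne_top
  have hD : ∀ p ∈ J ×ˢ (V ×ˢ W), _ := fun p hp => measure_ball_mul_ne_zero_ne_top hball
    (hJ' _ hp.1).1 (hJ' _ hp.1).2 (.inl hp.2.1) (.inr hp.2.2)
  have husc := upperSemicontinuousOn_volumeBound hc₄.le hD
  have hpos : ∀ p ∈ J ×ˢ (V ×ˢ W), 0 < volumeBound ν Ψ c₄ p.1 p.2.1 p.2.2 :=
    fun p hp => volumeBound_pos hc₄ (hD p hp)
  obtain ⟨m, hm⟩ := pow_unbounded_of_one_lt (cvd : ℝ) one_lt_two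
  refine ⟨fun t ht x hx y hy => hpos (t, x, y) ⟨ht, hx, hy⟩, husc,
    (upperSemicontinuousOn_iff_restrict.2 husc).measurable, fun t ht x hx y hy _ => ?_,
    fun t ht y hy => husc.comp (g := fun x => (t, x, y)) (by fun_prop) fun x hx => ⟨ht, hx, hy⟩,
    ⟨(m + 1 : ℕ) / β₁, 4 ^ (m + 1) * cΨ ^ (((m + 1 : ℕ) : ℝ) / β₁), by positivity, by positivity,
      fun t ht x hx y hy s hs z hz w hw hst => ?_⟩⟩
  · exact UpperSemicontinuousWithinAt.limsup_le_of_nonneg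
      ((husc.upperSemicontinuousWithinAt ⟨ht, hx, hy⟩).comp (g := fun s => (s, x, y))
        (by fun_prop : Continuous _).continuousWithinAt fun s hs => ⟨hs.1, hx, hy⟩)
      (fun s hs => (hpos (s, x, y) ⟨hs.1, hx, hy⟩).le) (hpos (t, x, y) ⟨ht, hx, hy⟩).le
  · exact volumeBound_div_le hc₄ hcΨ (by linarith) (fun r R hr hrR => (hΨ r R hr hrR).1)
      (hm.le.trans (pow_le_pow_right₀ one_le_two m.le_succ))
      (fun x hx r hr hrR => (hν x hx r hr hrR).2.1) hball (hJ' s hs).1 hst (hJ' t ht).2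
      (.inl hx) (.inr hy) (.inl hz) (.inr hw) ((Metric.edist_le_ediam_of_mem hx hz).trans hdV)
      ((Metric.edist_le_ediam_of_mem hy hw).trans hdW)

/-- Under volume doubling for `ν` on `(V ∪ W) × (0,R)`, the volume function
`F_t(x,y) = c₄ ν(B(x,Ψ⁻¹(t)))^{-1/2} ν(B(y,Ψ⁻¹(t)))^{-1/2}` on `(0,Ψ(R)] × V × W`
is positive, upper semicontinuous (hence Borel measurable and satisfies (UB1), (UB2)),
and satisfies (DB)_Ψ. -/
theorem dynkin_hunt_stmt9 {M : Type*} [MetricSpace M] [LocallyCompactSpace M]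
    [TopologicalSpace.SeparableSpace M] [MeasurableSpace M] [BorelSpace M]
    (Ψ : ℝ≥0 ≃ₜ ℝ≥0) (cΨ β₁ β₂ : ℝ)
    (hcΨ : 0 < cΨ) (hβ₁ : 1 < β₁) (hβ₁₂ : β₁ ≤ β₂)
    (hΨ : ∀ r R : ℝ≥0, 0 < r → r ≤ R →
      cΨ⁻¹ * ((R : ℝ) / (r : ℝ)) ^ β₁ ≤ ((Ψ R : ℝ≥0) : ℝ) / ((Ψ r : ℝ≥0) : ℝ) ∧
      ((Ψ R : ℝ≥0) : ℝ) / ((Ψ r : ℝ≥0) : ℝ) ≤ cΨ * ((R : ℝ) / (r : ℝ)) ^ β₂)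
    (R : ℝ≥0∞) (hR : 0 < R)
    (V W : Set M) (hV : IsOpen V) (hW : IsOpen W)
    (hdV : EMetric.diam V ≤ R) (hdW : EMetric.diam W ≤ R)
    (ν : Measure M) (cvd : ℝ≥0) (hcvd : 0 < cvd)
    (hν : ∀ x ∈ V ∪ W, ∀ r : ℝ, 0 < r → ENNReal.ofReal r < R →
      0 < ν (Metric.ball x (2 * r)) ∧
      ν (Metric.ball x (2 * r)) ≤ (cvd : ℝ≥0∞) * ν (Metric.ball x r) ∧
      ν (Metric.ball x r) < ⊤)
    (c₄ : ℝ) (hc₄ : 0 < c₄)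
    (J : Set ℝ≥0)
    (hJ : J = {t : ℝ≥0 | 0 < t ∧
      (t : ℝ≥0∞) ≤ if R = ⊤ then ⊤ else ((Ψ R.toNNReal : ℝ≥0) : ℝ≥0∞)})
    (F : ℝ≥0 → M → M → ℝ)
    (hF : ∀ (t : ℝ≥0) (x y : M), F t x y =
      c₄ * ((ν (Metric.ball x ((Ψ.symm t : ℝ≥0) : ℝ))).toReal) ^ (-(2⁻¹ : ℝ)) *
        ((ν (Metric.ball y ((Ψ.symm t : ℝ≥0) : ℝ))).toReal) ^ (-(2⁻¹ : ℝ))) :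
    (∀ t ∈ J, ∀ x ∈ V, ∀ y ∈ W, 0 < F t x y) ∧
    UpperSemicontinuousOn (fun p : ℝ≥0 × M × M => F p.1 p.2.1 p.2.2) (J ×ˢ (V ×ˢ W)) ∧
    (Measurable fun p : (J ×ˢ (V ×ˢ W) : Set (ℝ≥0 × M × M)) =>
      F (p : ℝ≥0 × M × M).1 (p : ℝ≥0 × M × M).2.1 (p : ℝ≥0 × M × M).2.2) ∧
    -- (UB1)
    (∀ t ∈ J, ∀ x ∈ V, ∀ y ∈ W, (∃ s ∈ J, t < s) →
      Filter.limsup (fun s => F s x y) (nhdsWithin t (J ∩ Set.Ioi t)) ≤ F t x y) ∧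
    -- (UB2)
    (∀ t ∈ J, ∀ y ∈ W, UpperSemicontinuousOn (fun x => F t x y) V) ∧
    -- (DB)_Ψ
    (∃ αF cF : ℝ, 0 < αF ∧ 0 < cF ∧
      ∀ t ∈ J, ∀ x ∈ V, ∀ y ∈ W, ∀ s ∈ J, ∀ z ∈ V, ∀ w ∈ W, s ≤ t →
        F s z w / F t x y ≤
          cF * ((max (max (t : ℝ) ((Ψ (nndist x z) : ℝ≥0) : ℝ)) ((Ψ (nndist y w) : ℝ≥0) : ℝ))
            / (s : ℝ)) ^ αF) :=
  dynkin_hunt_stmt9_general Ψ cΨ β₁ β₂ hcΨ hβ₁ hΨ R V W hdV hdW ν cvd hν c₄ hc₄ J hJ F hF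
end

section
/- Let (M,d) be a locally compact separable metric space with a σ-finite Borel measure μ, let I be a Borel subset of [0,∞), let V, W be Borel subsets of M, and let H = H_t(x,y) : I × V × W → [0,∞] be Borel measurable. Let (κ_{t,x})_{(t,x)∈I×V} be a family of Borel measures on M such that κ_{t,x}(M) ≤ 1 for all (t,x) ∈ I × V and such that (t,x) ↦ κ_{t,x}(A) is Borel measurable on I × V for every Borel set A ⊆ M. Then the following are equivalent: (1) for every (t,x) ∈ I × V and every Borel set A ⊆ W, κ_{t,x}(A) ≤ ∫_A H_t(x,y) dμ(y); (2) there exists a Borel measurable function p = p_t(x,y) : I × V × W → [0,∞] such that for every (t,x) ∈ I × V, κ_{t,x}(A) = ∫_A p_t(x,y) dμ(y) for every Borel set A ⊆ W, and p_t(x,y) ≤ H_t(x,y) for every y ∈ W. -/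
open scoped NNReal ENNReal
open MeasureTheory Set

/-!
Restricting `κ_{t,x}` to `W` gives a finite kernel on `I × V`, and domination by `H` makes each
`κ_{t,x}|_W` absolutely continuous with respect to `μ|_W`. The Radon–Nikodym theorem for kernels
(taken against the finite measure `μ.toFinite`, which has the same null sets as `μ`) yields a
density that is jointly measurable in `((t,x), y)`. Domination forces the density below `H`
only `μ`-a.e., so the density `p` is its minimum with `H`, which changes no integral.
-/

namespace ProbabilityTheory.Kernel

variable {α M : Type*} [MeasurableSpace α] [MeasurableSpace M]
  [MeasurableSpace.CountableOrCountablyGenerated α M]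

theorem exists_measurable_density_of_absolutelyContinuous (κ : Kernel α M) [IsFiniteKernel κ]
    (μ : Measure M) [SigmaFinite μ] (hac : ∀ a, κ a ≪ μ) :
    ∃ f : α → M → ℝ≥0∞, Measurable (Function.uncurry f) ∧ ∀ a, κ a = μ.withDensity (f a) := by
  set ν := μ.toFinite
  set g := κ.rnDeriv (const α ν)
  have hg : Measurable (Function.uncurry g) := κ.measurable_rnDeriv _
  have hρ : Measurable (ν.rnDeriv μ) := Measure.measurable_rnDeriv ν μ
  refine ⟨fun a => ν.rnDeriv μ * g a, (hρ.comp measurable_snd).mul hg, fun a => ?_⟩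
  calc κ a = ν.withDensity (g a) := by
        rw [← withDensity_rnDeriv_eq (η := const α ν) ((hac a).trans
          (absolutelyContinuous_toFinite μ)), Kernel.withDensity_apply _ hg, const_apply]
    _ = μ.withDensity (ν.rnDeriv μ * g a) := by
        rw [MeasureTheory.withDensity_mul _ hρ hg.of_uncurry_left,
          Measure.withDensity_rnDeriv_eq ν μ (toFinite_absolutelyContinuous μ)]

theorem exists_measurable_density_min_of_le_setLIntegral (κ : Kernel α M) [IsFiniteKernel κ]
    (μ : Measure M) [SigmaFinite μ] (H : α → M → ℝ≥0∞)
    (hle : ∀ a s, MeasurableSet s → κ a s ≤ ∫⁻ y in s, H a y ∂μ) :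
    ∃ f : α → M → ℝ≥0∞, Measurable (Function.uncurry f) ∧
      ∀ a, κ a = μ.withDensity fun y => min (f a y) (H a y) := by
  have hac (a : α) : κ a ≪ μ := Measure.AbsolutelyContinuous.mk fun s hs hμs =>
    le_antisymm ((hle a s hs).trans_eq (setLIntegral_measure_zero s _ hμs)) zero_le
  obtain ⟨f, hf, hκf⟩ := κ.exists_measurable_density_of_absolutelyContinuous μ hac
  refine ⟨f, hf, fun a => ?_⟩
  have hfH : f a ≤ᵐ[μ] H a := ae_le_of_forall_setLIntegral_le_of_sigmaFinite hf.of_uncurry_left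
    fun s hs _ => by rw [← MeasureTheory.withDensity_apply _ hs, ← hκf a]; exact hle a s hs
  rw [hκf a]
  exact MeasureTheory.withDensity_congr_ae (hfH.mono fun y hy => (min_eq_left hy).symm)

end ProbabilityTheory.Kernel

open ProbabilityTheory

theorem dynkin_hunt_stmt10_general {M : Type*} [MetricSpace M]
    [TopologicalSpace.SeparableSpace M] [MeasurableSpace M] [BorelSpace M]
    (μ : Measure M) [SigmaFinite μ]
    (I : Set ℝ)
    (V W : Set M) (hW : MeasurableSet W)
    (H : ℝ → M → M → ℝ≥0∞)
    (hHmeas : Measurable fun p : (I ×ˢ (V ×ˢ W) : Set (ℝ × M × M)) =>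
      H (p : ℝ × M × M).1 (p : ℝ × M × M).2.1 (p : ℝ × M × M).2.2)
    (κ : ℝ → M → Measure M)
    (hκ1 : ∀ t ∈ I, ∀ x ∈ V, κ t x Set.univ ≤ 1)
    (hκmeas : ∀ A : Set M, MeasurableSet A →
      Measurable fun p : (I ×ˢ V : Set (ℝ × M)) => κ (p : ℝ × M).1 (p : ℝ × M).2 A) :
    (∀ t ∈ I, ∀ x ∈ V, ∀ A : Set M, A ⊆ W → MeasurableSet A →
        κ t x A ≤ ∫⁻ y in A, H t x y ∂μ) ↔
      ∃ p : ℝ → M → M → ℝ≥0∞,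
        (Measurable fun q : (I ×ˢ (V ×ˢ W) : Set (ℝ × M × M)) =>
          p (q : ℝ × M × M).1 (q : ℝ × M × M).2.1 (q : ℝ × M × M).2.2) ∧
        ∀ t ∈ I, ∀ x ∈ V,
          (∀ A : Set M, A ⊆ W → MeasurableSet A → κ t x A = ∫⁻ y in A, p t x y ∂μ) ∧
          (∀ y ∈ W, p t x y ≤ H t x y) := by
  classical
  have : SecondCountableTopology M := UniformSpace.secondCountable_of_separable M
  constructor
  · intro hdom
    let K : Kernel (I ×ˢ V : Set (ℝ × M)) M :=
      ⟨fun a => κ a.1.1 a.1.2, Measure.measurable_of_measurable_coe _ hκmeas⟩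
    have : IsFiniteKernel K := ⟨⟨1, ENNReal.one_lt_top, fun a => hκ1 _ a.2.1 _ a.2.2⟩⟩
    obtain ⟨f, hf, hKf⟩ := (K.restrict hW).exists_measurable_density_min_of_le_setLIntegral
      (μ.restrict W) (fun a => H a.1.1 a.1.2) fun a s hs => by
        rw [Kernel.restrict_apply' _ _ _ hs, Measure.restrict_restrict hs]
        exact hdom _ a.2.1 _ a.2.2 _ inter_subset_right (hs.inter hW)
    refine ⟨fun t x y => if h : (t, x) ∈ I ×ˢ V then min (f ⟨(t, x), h⟩ y) (H t x y) else 0,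
      ?_, fun t ht x hx => ?_⟩
    · have hproj : Measurable fun q : (I ×ˢ (V ×ˢ W) : Set (ℝ × M × M)) =>
          ((⟨(q.1.1, q.1.2.1), q.2.1, q.2.2.1⟩ : (I ×ˢ V : Set (ℝ × M))), q.1.2.2) := by
        fun_prop
      convert (hf.comp hproj).min hHmeas with q
      exact dif_pos ⟨q.2.1, q.2.2.1⟩
    have htx : (t, x) ∈ I ×ˢ V := ⟨ht, hx⟩
    simp only [dif_pos htx]
    refine ⟨fun A hAW hA => ?_, fun y _ => min_le_right _ _⟩
    calc κ t x A = K.restrict hW ⟨(t, x), htx⟩ A := by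
          rw [Kernel.restrict_apply' _ _ _ hA, inter_eq_left.2 hAW]; rfl
      _ = ∫⁻ y in A, min (f ⟨(t, x), htx⟩ y) (H t x y) ∂μ := by
          rw [hKf, withDensity_apply _ hA, Measure.restrict_restrict hA, inter_eq_left.2 hAW]
  · rintro ⟨p, -, hp⟩ t ht x hx A hAW hA
    rw [(hp t ht x hx).1 A hAW hA]
    exact setLIntegral_mono' hA fun y hy => (hp t ht x hx).2 y (hAW hy)

/-- Kernel form of the localized existence of the heat kernel: for a family of
sub-probability Borel measures `κ_{t,x}` on `M`, jointly measurable in `(t,x) ∈ I × V`,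
the domination `κ_{t,x}(A) ≤ ∫_A H_t(x,·) dμ` for all Borel `A ⊆ W` is equivalent to the
existence of a Borel measurable density `p_t(x,y) ≤ H_t(x,y)` on `I × V × W` with
`κ_{t,x}(A) = ∫_A p_t(x,·) dμ` for all Borel `A ⊆ W`. -/
theorem dynkin_hunt_stmt10 {M : Type*} [MetricSpace M] [LocallyCompactSpace M]
    [TopologicalSpace.SeparableSpace M] [MeasurableSpace M] [BorelSpace M]
    (μ : Measure M) [SigmaFinite μ]
    (I : Set ℝ) (hImeas : MeasurableSet I) (hI : I ⊆ Set.Ici 0)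
    (V W : Set M) (hV : MeasurableSet V) (hW : MeasurableSet W)
    (H : ℝ → M → M → ℝ≥0∞)
    (hHmeas : Measurable fun p : (I ×ˢ (V ×ˢ W) : Set (ℝ × M × M)) =>
      H (p : ℝ × M × M).1 (p : ℝ × M × M).2.1 (p : ℝ × M × M).2.2)
    (κ : ℝ → M → Measure M)
    (hκ1 : ∀ t ∈ I, ∀ x ∈ V, κ t x Set.univ ≤ 1)
    (hκmeas : ∀ A : Set M, MeasurableSet A →
      Measurable fun p : (I ×ˢ V : Set (ℝ × M)) => κ (p : ℝ × M).1 (p : ℝ × M).2 A) :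
    (∀ t ∈ I, ∀ x ∈ V, ∀ A : Set M, A ⊆ W → MeasurableSet A →
        κ t x A ≤ ∫⁻ y in A, H t x y ∂μ) ↔
      ∃ p : ℝ → M → M → ℝ≥0∞,
        (Measurable fun q : (I ×ˢ (V ×ˢ W) : Set (ℝ × M × M)) =>
          p (q : ℝ × M × M).1 (q : ℝ × M × M).2.1 (q : ℝ × M × M).2.2) ∧
        ∀ t ∈ I, ∀ x ∈ V,
          (∀ A : Set M, A ⊆ W → MeasurableSet A → κ t x A = ∫⁻ y in A, p t x y ∂μ) ∧
          (∀ y ∈ W, p t x y ≤ H t x y) :=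
  dynkin_hunt_stmt10_general μ I V W hW H hHmeas κ hκ1 hκmeas
end

section
/- Let (Ω, 𝓕, P) be a probability space, let τ : Ω → [0,∞] be a random variable, and let T, ε ∈ (0,∞). If E[τ ∧ T] ≥ ε T, then for every δ ∈ (0,∞), E[exp(−τ/(δT))] ≤ 1 − (ε/δ) e^{−1/δ}. -/
open scoped NNReal ENNReal
open MeasureTheory

/-!
Put `c = δT`. Pointwise, `exp (-τ/c) ≤ 1 - (e^{-1/δ}/c) (τ ∧ T)`: for `τ ≤ T` this follows from
`e^{-τ/c} (1 + τ/c) ≤ 1` and `e^{-T/c} ≤ e^{-τ/c}`, for `τ ≥ T` from `e^{-τ/c} ≤ e^{-T/c}` and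
`e^{-T/c} (1 + T/c) ≤ 1`. Taking expectations and using `E[τ ∧ T] ≥ εT` gives the bound.
-/

namespace Real

theorem exp_neg_mul_one_add_le_one (x : ℝ) : exp (-x) * (1 + x) ≤ 1 := by
  calc exp (-x) * (1 + x) ≤ exp (-x) * exp x := by
        gcongr
        linarith [add_one_le_exp x]
    _ = 1 := by rw [← exp_add, neg_add_cancel, exp_zero]

theorem exp_neg_le_one_sub_exp_neg_mul_min {u : ℝ} (hu : 0 ≤ u) (a : ℝ) :
    exp (-u) ≤ 1 - exp (-a) * min u a := by
  rcases le_total u a with hua | hau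
  · rw [min_eq_left hua]
    have : exp (-a) * u ≤ exp (-u) * u := by gcongr
    nlinarith [exp_neg_mul_one_add_le_one u]
  · rw [min_eq_right hau]
    have : exp (-u) ≤ exp (-a) := by gcongr
    nlinarith [exp_neg_mul_one_add_le_one a]

end Real

namespace ENNReal

theorem ite_exp_neg_toReal_div_le {c : ℝ} (hc : 0 < c) {T : ℝ} (hT : 0 ≤ T) (t : ℝ≥0∞) :
    (if t = ⊤ then 0 else Real.exp (-t.toReal / c))
      ≤ 1 - Real.exp (-(T / c)) / c * (min t (ENNReal.ofReal T)).toReal := by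
  split_ifs with ht
  · have key := Real.exp_neg_le_one_sub_exp_neg_mul_min (u := T / c) (by positivity) (T / c)
    rw [min_self] at key
    rw [ht, min_eq_right le_top, toReal_ofReal hT, div_mul_eq_mul_div, mul_div_assoc]
    linarith [Real.exp_pos (-(T / c))]
  · have key := Real.exp_neg_le_one_sub_exp_neg_mul_min (u := t.toReal / c) (by positivity) (T / c)
    rw [min_div_div_right hc.le, mul_div_assoc'] at key
    rwa [toReal_min ht ofReal_ne_top, toReal_ofReal hT, neg_div, div_mul_eq_mul_div]

end ENNReal

section

variable {Ω : Type*} [MeasurableSpace Ω] {μ : Measure Ω}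

theorem le_integral_toReal_of_ofReal_le_lintegral {f : Ω → ℝ≥0∞} (hf : AEMeasurable f μ)
    (hfi : ∫⁻ ω, f ω ∂μ ≠ ∞) {x : ℝ} (h : ENNReal.ofReal x ≤ ∫⁻ ω, f ω ∂μ) :
    x ≤ ∫ ω, (f ω).toReal ∂μ := by
  rw [integral_toReal hf (ae_lt_top' hf hfi)]
  exact (ENNReal.ofReal_le_iff_le_toReal hfi).1 h

theorem lintegral_min_ofReal_ne_top [IsFiniteMeasure μ] (τ : Ω → ℝ≥0∞) (T : ℝ) :
    ∫⁻ ω, min (τ ω) (ENNReal.ofReal T) ∂μ ≠ ∞ :=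
  (IsFiniteMeasure.lintegral_lt_top_of_bounded_to_ennreal μ
    ⟨T.toNNReal, fun _ ↦ min_le_right _ _⟩).ne

theorem integrable_toReal_min_ofReal [IsFiniteMeasure μ] {τ : Ω → ℝ≥0∞} (hτ : AEMeasurable τ μ)
    {T : ℝ} (hT : 0 ≤ T) : Integrable (fun ω ↦ (min (τ ω) (ENNReal.ofReal T)).toReal) μ :=
  .of_bound (hτ.min aemeasurable_const).ennreal_toReal.aestronglyMeasurable T <| .of_forall
    fun _ ↦ by
      rw [Real.norm_of_nonneg ENNReal.toReal_nonneg]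
      exact ENNReal.toReal_le_of_le_ofReal hT (min_le_right _ _)

end

theorem dynkin_hunt_stmt13_general {Ω : Type*} [MeasurableSpace Ω]
    (P : Measure Ω) [IsProbabilityMeasure P]
    (τ : Ω → ℝ≥0∞) (hτ : Measurable τ)
    (T ε : ℝ) (hT : 0 < T)
    (h : ENNReal.ofReal (ε * T) ≤ ∫⁻ ω, min (τ ω) (ENNReal.ofReal T) ∂P) :
    ∀ δ : ℝ, 0 < δ →
      (∫ ω, (if τ ω = ⊤ then 0 else Real.exp (-(τ ω).toReal / (δ * T))) ∂P)
        ≤ 1 - ε / δ * Real.exp (-(1 / δ)) := by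
  intro δ hδ
  have hc : 0 < δ * T := by positivity
  set m : Ω → ℝ := fun ω ↦ (min (τ ω) (ENNReal.ofReal T)).toReal
  have hm_int : Integrable m P := integrable_toReal_min_ofReal hτ.aemeasurable hT.le
  have hm_mean : ε * T ≤ ∫ ω, m ω ∂P :=
    le_integral_toReal_of_ofReal_le_lintegral (hτ.min measurable_const).aemeasurable
      (lintegral_min_ofReal_ne_top τ T) h
  have hTc : T / (δ * T) = 1 / δ := by field_simp
  calc ∫ ω, (if τ ω = ⊤ then 0 else Real.exp (-(τ ω).toReal / (δ * T))) ∂P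
      ≤ ∫ ω, (1 - Real.exp (-(T / (δ * T))) / (δ * T) * m ω) ∂P :=
        integral_mono_of_nonneg
          (.of_forall fun ω ↦ by dsimp only [Pi.zero_apply]; split_ifs <;> positivity)
          ((integrable_const 1).sub (hm_int.const_mul _))
          (.of_forall fun ω ↦ ENNReal.ite_exp_neg_toReal_div_le hc hT.le (τ ω))
    _ = 1 - Real.exp (-(T / (δ * T))) / (δ * T) * ∫ ω, m ω ∂P := by
        rw [integral_sub (integrable_const 1) (hm_int.const_mul _), integral_const_mul]
        simp
    _ ≤ 1 - Real.exp (-(T / (δ * T))) / (δ * T) * (ε * T) := by gcongr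
    _ = 1 - ε / δ * Real.exp (-(1 / δ)) := by
        rw [hTc]
        field_simp

/-- If `E[τ ∧ T] ≥ εT` with `T, ε ∈ (0,∞)`, then for every `δ ∈ (0,∞)`,
`E[exp(-τ/(δT))] ≤ 1 - (ε/δ) e^{-1/δ}` (with `exp(-τ/(δT)) := 0` on `{τ = ∞}`). -/
theorem dynkin_hunt_stmt13 {Ω : Type*} [MeasurableSpace Ω]
    (P : Measure Ω) [IsProbabilityMeasure P]
    (τ : Ω → ℝ≥0∞) (hτ : Measurable τ)
    (T ε : ℝ) (hT : 0 < T) (hε : 0 < ε)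
    (h : ENNReal.ofReal (ε * T) ≤ ∫⁻ ω, min (τ ω) (ENNReal.ofReal T) ∂P) :
    ∀ δ : ℝ, 0 < δ →
      (∫ ω, (if τ ω = ⊤ then 0 else Real.exp (-(τ ω).toReal / (δ * T))) ∂P)
        ≤ 1 - ε / δ * Real.exp (-(1 / δ)) :=
  dynkin_hunt_stmt13_general P τ hτ T ε hT h
end
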